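/- arXiv:2005.07172 — 13 statements merged into one kernel-verified Lean document; each statement's English description precedes it below -/
import Mathlib

section
/- Let F be a finite field with Fintype.card F = q and let V be an F-vector space with finrank V = n. For every k with 0 ≤ k ≤ n, the number of F-subspaces of V of dimension k satisfies the Gaussian-binomial identity: (card {U : Submodule F V | finrank U = k}) * ∏_{i=0}^{k-1} (q^k − q^i) = ∏_{i=0}^{k-1} (q^n − q^i). -/
open Module

section Aux
open Module Submodule

variable {F V : Type*} [Field F] [Fintype F] [AddCommGroup V] [Module F V]
  [FiniteDimensional F V]

noncomputable def fiberEquiv (k : ℕ) (U : {U : Submodule F V // Module.finrank F U = k}) :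
    {s : {s : Fin k → V // LinearIndependent F s} //
      Submodule.span F (Set.range (s : Fin k → V)) = U.1} ≃
    {t : Fin k → U.1 // LinearIndependent F t} where
  toFun s := ⟨fun i => ⟨s.1.1 i, s.2.le (subset_span (Set.mem_range_self i))⟩, by
    have h : (U.1.subtype ∘ fun i => (⟨s.1.1 i, s.2.le (subset_span (Set.mem_range_self i))⟩ : U.1)) = s.1.1 := rfl
    rw [← LinearMap.linearIndependent_iff U.1.subtype (ker_subtype U.1), h]
    exact s.1.2⟩
  invFun t := ⟨⟨fun i => (t.1 i : V), t.2.map' U.1.subtype (ker_subtype U.1)⟩, by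
    have hcard : Fintype.card (Fin k) = Module.finrank F U.1 := by simp [U.2]
    have htop : Submodule.span F (Set.range t.1) = ⊤ :=
      t.2.span_eq_top_of_card_eq_finrank' hcard
    have : Set.range (fun i => (t.1 i : V)) = U.1.subtype '' Set.range t.1 := by
      ext x; simp [Set.range_comp]
    rw [this, ← Submodule.map_span, htop, Submodule.map_top, range_subtype]⟩
  left_inv s := by ext i; rfl
  right_inv t := by ext i; rfl

end Aux

theorem stmt_0 (F : Type*) [Field F] [Fintype F] (V : Type*) [AddCommGroup V] [Module F V]
    [FiniteDimensional F V] (q n : ℕ) (hq : Fintype.card F = q)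
    (hn : Module.finrank F V = n) (k : ℕ) (hk : k ≤ n) :
    Nat.card {U : Submodule F V // Module.finrank F U = k} *
        ∏ i ∈ Finset.range k, (q ^ k - q ^ i) =
      ∏ i ∈ Finset.range k, (q ^ n - q ^ i) := by
  subst hq hn
  classical
  have : Finite V := Module.finite_of_finite F
  have : Fintype V := Fintype.ofFinite V
  set f : {s : Fin k → V // LinearIndependent F s} →
      {U : Submodule F V // Module.finrank F U = k} :=
    fun s => ⟨Submodule.span F (Set.range s.1), by
      rw [finrank_span_eq_card s.2, Fintype.card_fin]⟩
  have key : Nat.card {s : Fin k → V // LinearIndependent F s} =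
      ∏ i ∈ Finset.range k, (Fintype.card F ^ Module.finrank F V - Fintype.card F ^ i) := by
    rw [card_linearIndependent hk, ← Fin.prod_univ_eq_prod_range]
  rw [← key, Nat.card_congr (Equiv.sigmaFiberEquiv f).symm]
  simp only [Nat.card_eq_fintype_card]
  rw [Fintype.card_sigma]
  have hfib : ∀ U : {U : Submodule F V // Module.finrank F U = k},
      Fintype.card {s // f s = U} = ∏ i ∈ Finset.range k,
        (Fintype.card F ^ k - Fintype.card F ^ i) := by
    intro U
    have e1 : {s // f s = U} ≃ {s : {s : Fin k → V // LinearIndependent F s} //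
        Submodule.span F (Set.range (s : Fin k → V)) = U.1} :=
      Equiv.subtypeEquivRight (fun s => by simp [f, Subtype.ext_iff])
    rw [← Nat.card_eq_fintype_card, Nat.card_congr (e1.trans (fiberEquiv k U)),
      card_linearIndependent (by rw [U.2]), U.2, ← Fin.prod_univ_eq_prod_range]
  rw [Finset.sum_congr rfl (fun U _ => hfib U), Finset.sum_const, Finset.card_univ,
    ← Nat.card_eq_fintype_card, smul_eq_mul]
end

section
/- Let p be a prime, F a finite field with Fintype.card F = q where q ≡ 1 (mod p), and V an F-vector space with finrank V = n. Then for every 0 ≤ k ≤ n, the number of k-dimensional subspaces of V is congruent to the ordinary binomial coefficient: (card {U : Submodule F V | finrank U = k} : ZMod p) = (Nat.choose n k : ZMod p). -/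
/-!
Since `p ∣ q - 1`, the field contains an element `ζ ≠ 1` of order `p`, and the diagonal torus
`(ι → ⟨ζ⟩)` is a `p`-group acting on the `k`-dimensional subspaces of `F^n`; their number is
therefore congruent mod `p` to the number of fixed subspaces. A fixed subspace `U` contains, with
every `u`, the vector `g • u - u = (ζ - 1) u_i e_i` for `g` scaling the `i`-th coordinate by `ζ`,
so it is spanned by the standard basis vectors it contains. Hence the fixed points are exactly
the `n.choose k` coordinate subspaces.
-/

open Module MulAction Pointwise

theorem IsPGroup.pi {p : ℕ} [Fact p.Prime] {G ι : Type*} [Group G] [Finite G] [Finite ι]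
    (hG : IsPGroup p G) : IsPGroup p (ι → G) := by
  obtain ⟨m, hm⟩ := IsPGroup.iff_card.mp hG
  exact IsPGroup.of_card (n := m * Nat.card ι) (by rw [Nat.card_fun, hm, pow_mul])

namespace Submodule

variable {R M N : Type*} [Ring R] [AddCommGroup M] [Module R M] [AddCommGroup N] [Module R N]

theorem finrank_pointwise_smul {G : Type*} [Group G] [DistribMulAction G M] [SMulCommClass G R M]
    (g : G) (U : Submodule R M) : finrank R ↥(g • U) = finrank R U :=
  (DistribMulAction.toLinearEquiv R M g).finrank_map_eq U

theorem card_finrank_eq_congr (e : M ≃ₗ[R] N) (k : ℕ) :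
    Nat.card {U : Submodule R M // finrank R U = k} =
      Nat.card {U : Submodule R N // finrank R U = k} :=
  Nat.card_congr <| (orderIsoMapComap e).toEquiv.subtypeEquiv fun U => by
    show _ ↔ finrank R (U.map (e : M →ₗ[R] N)) = k
    rw [e.finrank_map_eq]

def subMulActionFinrankEq (G : Type*) [Group G] [DistribMulAction G M] [SMulCommClass G R M]
    (k : ℕ) : SubMulAction G (Submodule R M) where
  carrier := {U | finrank R U = k}
  smul_mem' g U hU := (finrank_pointwise_smul g U).trans hU

end Submodule

section DiagonalAction

variable {F ι : Type*} [Field F] {H : Subgroup Fˣ}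

-- Mathlib only provides this instance with the two scalar actions in the other order.
instance : SMulCommClass (ι → H) F (ι → F) :=
  .symm _ _ _

theorem single_mem_of_mem_fixedPoints [DecidableEq ι] {ζ : H} (hζ : ζ ≠ 1)
    {U : Submodule F (ι → F)} (hU : U ∈ fixedPoints (ι → H) (Submodule F (ι → F)))
    {u : ι → F} (hu : u ∈ U) (i : ι) : Pi.single i (u i) ∈ U := by
  have hζF : ((ζ : Fˣ) : F) - 1 ≠ 0 := by
    rw [sub_ne_zero, Ne, Units.val_eq_one, OneMemClass.coe_eq_one]
    exact hζ
  set g : ι → H := Pi.mulSingle i ζ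
  have hg : g • u ∈ U := hU g ▸ Submodule.smul_mem_pointwise_smul _ _ _ hu
  have hdiff : g • u - u = (((ζ : Fˣ) : F) - 1) • Pi.single i (u i) := by
    ext j
    by_cases hj : j = i
    · subst hj; simp [g, Subgroup.smul_def, Units.smul_def, sub_mul]
    · simp [g, hj]
  have := U.smul_mem (((ζ : Fˣ) : F) - 1)⁻¹ (U.sub_mem hg hu)
  rwa [hdiff, smul_smul, inv_mul_cancel₀ hζF, one_smul] at this

variable (F) [Fintype ι]

def coordSubspace (S : Set ι) : Submodule F (ι → F) :=
  Submodule.span F (Pi.basisFun F ι '' S)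

variable {F}

theorem basisFun_mem_coordSubspace_iff {S : Set ι} {i : ι} :
    Pi.basisFun F ι i ∈ coordSubspace F S ↔ i ∈ S := by
  rw [coordSubspace, Basis.mem_span_image, Basis.repr_self,
    Finsupp.support_single _ one_ne_zero]
  simp

theorem coordSubspace_injective : Function.Injective (coordSubspace F (ι := ι)) := by
  intro S T h
  ext i
  rw [← basisFun_mem_coordSubspace_iff (F := F), h, basisFun_mem_coordSubspace_iff]

theorem finrank_coordSubspace (S : Finset ι) :
    finrank F (coordSubspace F (S : Set ι)) = S.card := by
  rw [coordSubspace, Set.image_eq_range]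
  exact (finrank_span_eq_card ((Pi.basisFun F ι).linearIndependent.comp _
    Subtype.val_injective)).trans (Fintype.card_coe S)

theorem smul_coordSubspace (g : ι → H) (S : Set ι) :
    g • coordSubspace F S = coordSubspace F S := by
  classical
  have smul_le (g : ι → H) : g • coordSubspace F S ≤ coordSubspace F S := by
    refine Submodule.map_span_le _ _ _ |>.mpr ?_
    rintro _ ⟨i, hi, rfl⟩
    have hgi : g • Pi.basisFun F ι i = ((g i : Fˣ) : F) • Pi.basisFun F ι i := by
      ext j
      by_cases hj : j = i
      · subst hj; simp [Subgroup.smul_def, Units.smul_def]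
      · simp [hj]
    rw [DistribSMul.toLinearMap_apply, hgi]
    exact Submodule.smul_mem _ _ (basisFun_mem_coordSubspace_iff.mpr hi)
  refine (smul_le g).antisymm ?_
  calc coordSubspace F S = g • g⁻¹ • coordSubspace F S := (smul_inv_smul g _).symm
    _ ≤ g • coordSubspace F S := Submodule.map_mono (smul_le g⁻¹)

theorem exists_eq_coordSubspace_of_mem_fixedPoints {ζ : H} (hζ : ζ ≠ 1)
    {U : Submodule F (ι → F)} (hU : U ∈ fixedPoints (ι → H) (Submodule F (ι → F))) :
    ∃ S : Finset ι, U = coordSubspace F S := by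
  classical
  set S := Finset.univ.filter (Pi.basisFun F ι · ∈ U)
  refine ⟨S, le_antisymm (fun u hu => ?_) ?_⟩
  · rw [← Finset.univ_sum_single u]
    refine Submodule.sum_mem _ fun i _ => ?_
    obtain hui | hui := eq_or_ne (u i) 0
    · simp [hui]
    have hi : Pi.basisFun F ι i ∈ U := by
      simpa [← Pi.single_smul, hui] using
        U.smul_mem (u i)⁻¹ (single_mem_of_mem_fixedPoints hζ hU hu i)
    simpa [← Pi.single_smul] using Submodule.smul_mem _ (u i)
      (basisFun_mem_coordSubspace_iff.mpr (by simpa [S] using hi : i ∈ S))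
  · refine Submodule.span_le.mpr ?_
    rintro _ ⟨i, hi, rfl⟩
    exact (Finset.mem_filter.mp hi).2

theorem card_finrank_eq_modEq_choose {p : ℕ} [Fact p.Prime] [Finite F] [Nontrivial H]
    (hH : IsPGroup p H) (k : ℕ) :
    Nat.card {U : Submodule F (ι → F) // finrank F U = k} ≡ (Fintype.card ι).choose k [MOD p] := by
  obtain ⟨ζ, hζ⟩ := exists_ne (1 : H)
  let X := Submodule.subMulActionFinrankEq (R := F) (M := ι → F) (ι → H) k
  let toSubspace (U : fixedPoints (ι → H) X) : Submodule F (ι → F) := (U : X)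
  let e : {S : Finset ι // S.card = k} ≃ fixedPoints (ι → H) X := Equiv.ofBijective
    (fun S => ⟨⟨coordSubspace F S, (finrank_coordSubspace S.1).trans S.2⟩,
      fun g => Subtype.ext (smul_coordSubspace g _)⟩)
    ⟨fun S T h => Subtype.ext <| Finset.coe_injective <|
        coordSubspace_injective (congrArg toSubspace h),
      fun ⟨⟨U, hUk⟩, hU⟩ => by
        obtain ⟨S, rfl⟩ := exists_eq_coordSubspace_of_mem_fixedPoints hζ
          (U := U) fun g => congrArg Subtype.val (hU g)
        exact ⟨⟨S, (finrank_coordSubspace S).symm.trans hUk⟩, rfl⟩⟩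
  have := (IsPGroup.pi (ι := ι) hH).card_modEq_card_fixedPoints X
  rwa [← Nat.card_congr e, Nat.card_eq_fintype_card (α := {S : Finset ι // S.card = k}),
    Fintype.card_finset_len] at this

end DiagonalAction

theorem stmt_2_general (p : ℕ) (hp : p.Prime) (F : Type*) [Field F] [Fintype F]
    (V : Type*) [AddCommGroup V] [Module F V] [FiniteDimensional F V]
    (q n : ℕ) (hq : Fintype.card F = q) (hqp : q ≡ 1 [MOD p])
    (hn : Module.finrank F V = n) (k : ℕ) :
    (Nat.card {U : Submodule F V // Module.finrank F U = k} : ZMod p) =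
      (Nat.choose n k : ZMod p) := by
  have : Fact p.Prime := ⟨hp⟩
  have hpF : p ∣ Nat.card Fˣ := by
    rw [Nat.card_units, Nat.card_eq_fintype_card, hq]
    exact (Nat.modEq_iff_dvd' (hq ▸ Fintype.card_pos)).mp hqp.symm
  obtain ⟨ζ, hζ⟩ := exists_prime_orderOf_dvd_card' p hpF
  have hcard : Nat.card (Subgroup.zpowers ζ) = p := by rw [Nat.card_zpowers, hζ]
  have : Nontrivial (Subgroup.zpowers ζ) :=
    Finite.one_lt_card_iff_nontrivial.mp (hcard ▸ hp.one_lt)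
  have hH : IsPGroup p (Subgroup.zpowers ζ) := IsPGroup.of_card (n := 1) (by rw [hcard, pow_one])
  rw [Submodule.card_finrank_eq_congr (finBasisOfFinrankEq F V hn).equivFun k,
    ZMod.natCast_eq_natCast_iff]
  simpa using card_finrank_eq_modEq_choose (ι := Fin n) hH k

theorem stmt_2 (p : ℕ) (hp : p.Prime) (F : Type*) [Field F] [Fintype F]
    (V : Type*) [AddCommGroup V] [Module F V] [FiniteDimensional F V]
    (q n : ℕ) (hq : Fintype.card F = q) (hqp : q ≡ 1 [MOD p])
    (hn : Module.finrank F V = n) (k : ℕ) (hk : k ≤ n) :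
    (Nat.card {U : Submodule F V // Module.finrank F U = k} : ZMod p) =
      (Nat.choose n k : ZMod p) :=
  stmt_2_general p hp F V q n hq hqp hn k
end

section
/- Fix an integer n ≥ 3. Let Π be a type, dim : Π → ℕ a function with 1 ≤ dim x ≤ n−1 for all x, σ : Π → Π an involution (σ ∘ σ = id) with dim (σ x) = n − dim x for all x, and T ⊆ Π × Π × Π a set satisfying: (2) (u,v,w) ∈ T implies (v,w,u) ∈ T; (3) (u,v,w) ∈ T implies n divides dim u + dim v + dim w; (4) (u,v,w₁) ∈ T and (u,v,w₂) ∈ T imply w₁ = w₂; (5) (u,v,w) ∈ T implies (σ w, σ v, σ u) ∈ T. Then T satisfies condition (6) if and only if T satisfies condition (6′), where: (6) whenever (u₁,v₁,w) ∈ T, (u₂,v₂,σ w) ∈ T and dim uᵢ + dim vᵢ < n for i = 1,2, there exists a unique z with (v₂,u₁,z) ∈ T and (v₁,u₂,σ z) ∈ T; and (6′) whenever (u,v,σ r) ∈ T, (r,w,σ s) ∈ T and dim u + dim v + dim w < n, there exists a unique t with (u,t,σ s) ∈ T and (v,w,σ t) ∈ T. -/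
theorem stmt_3 (n : ℕ) (hn : 3 ≤ n) (P : Type*) (dim : P → ℕ)
    (hdim : ∀ x, 1 ≤ dim x ∧ dim x ≤ n - 1)
    (σ : P → P) (hσ : ∀ x, σ (σ x) = x)
    (hσdim : ∀ x, dim (σ x) = n - dim x)
    (T : Set (P × P × P))
    (h2 : ∀ u v w, (u, v, w) ∈ T → (v, w, u) ∈ T)
    (h3 : ∀ u v w, (u, v, w) ∈ T → n ∣ dim u + dim v + dim w)
    (h4 : ∀ u v w₁ w₂, (u, v, w₁) ∈ T → (u, v, w₂) ∈ T → w₁ = w₂)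
    (h5 : ∀ u v w, (u, v, w) ∈ T → (σ w, σ v, σ u) ∈ T) :
    (∀ u₁ v₁ u₂ v₂ w, (u₁, v₁, w) ∈ T → (u₂, v₂, σ w) ∈ T →
        dim u₁ + dim v₁ < n → dim u₂ + dim v₂ < n →
        ∃! z, (v₂, u₁, z) ∈ T ∧ (v₁, u₂, σ z) ∈ T) ↔
      (∀ u v w r s, (u, v, σ r) ∈ T → (r, w, σ s) ∈ T →
        dim u + dim v + dim w < n →
        ∃! t, (u, t, σ s) ∈ T ∧ (v, w, σ t) ∈ T) := by
  have key : ∀ a b c, (a, b, c) ∈ T → dim a + dim b < n →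
      dim a + dim b + dim c = n := by
    intro a b c hT hab
    obtain ⟨k, hk⟩ := h3 a b c hT
    have ha := hdim a; have hb := hdim b; have hc := hdim c
    rcases k with _ | _ | k
    · omega
    · omega
    · exfalso
      have : n * 2 ≤ n * (k + 1 + 1) := Nat.mul_le_mul_left n (by omega)
      omega
  constructor
  · intro h6 u v w r s hT1 hT2 hlt
    have hdu := hdim u; have hdv := hdim v; have hdw := hdim w
    have hdr := hdim r; have hds := hdim s
    have hσr := hσdim r; have hσs := hσdim s
    have e1 : dim u + dim v + dim (σ r) = n := key u v (σ r) hT1 (by omega)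
    have e2 : dim r + dim w + dim (σ s) = n := key r w (σ s) hT2 (by omega)
    have hT2' : (w, σ s, σ (σ r)) ∈ T := by
      rw [hσ r]; exact h2 r w (σ s) hT2
    obtain ⟨z, ⟨hz1, hz2⟩, huniq⟩ :=
      h6 u v w (σ s) (σ r) hT1 hT2' (by omega) (by omega)
    refine ⟨z, ⟨h2 (σ s) u z hz1, hz2⟩, ?_⟩
    intro t ⟨ht1, ht2⟩
    exact huniq t ⟨h2 t (σ s) u (h2 u t (σ s) ht1), ht2⟩
  · intro h6' u₁ v₁ u₂ v₂ w hT1 hT2 hlt1 hlt2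
    have hd1 := hdim u₁; have hd2 := hdim v₁; have hd3 := hdim u₂
    have hd4 := hdim v₂; have hdw := hdim w
    have hσw := hσdim w; have hσv := hσdim v₂
    have e1 : dim u₁ + dim v₁ + dim w = n := key u₁ v₁ w hT1 hlt1
    have e2 : dim u₂ + dim v₂ + dim (σ w) = n := key u₂ v₂ (σ w) hT2 hlt2
    have hT1' : (u₁, v₁, σ (σ w)) ∈ T := by rw [hσ w]; exact hT1
    have hT2' : (σ w, u₂, σ (σ v₂)) ∈ T := by
      rw [hσ v₂]; exact h2 v₂ (σ w) u₂ (h2 u₂ v₂ (σ w) hT2)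
    obtain ⟨t, ⟨ht1, ht2⟩, huniq⟩ :=
      h6' u₁ v₁ u₂ (σ w) (σ v₂) hT1' hT2' (by omega)
    rw [hσ v₂] at ht1
    refine ⟨t, ⟨h2 t v₂ u₁ (h2 u₁ t v₂ ht1), ht2⟩, ?_⟩
    intro z ⟨hz1, hz2⟩
    have : (u₁, z, σ (σ v₂)) ∈ T := by rw [hσ v₂]; exact h2 v₂ u₁ z hz1
    exact huniq z ⟨this, hz2⟩
end

section
/- Fix an integer n ≥ 3. Let Π be a type, dim : Π → ℕ a function with 1 ≤ dim x ≤ n−1 for all x, σ : Π → Π an involution (σ ∘ σ = id) with dim (σ x) = n − dim x for all x, and T ⊆ Π × Π × Π a set satisfying: (2) (u,v,w) ∈ T implies (v,w,u) ∈ T; (3) (u,v,w) ∈ T implies n divides dim u + dim v + dim w; (4) (u,v,w₁) ∈ T and (u,v,w₂) ∈ T imply w₁ = w₂; (5) (u,v,w) ∈ T implies (σ w, σ v, σ u) ∈ T. Then T satisfies condition (6′) if and only if T satisfies condition (6″), where: (6′) whenever (u,v,σ r) ∈ T, (r,w,σ s) ∈ T and dim u + dim v + dim w < n, there exists a unique t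 with (u,t,σ s) ∈ T and (v,w,σ t) ∈ T; and (6″) whenever (u,t,σ s) ∈ T, (v,w,σ t) ∈ T and dim u + dim v + dim w < n, there exists a unique r with (u,v,σ r) ∈ T and (r,w,σ s) ∈ T. -/
theorem stmt_4 (n : ℕ) (hn : 3 ≤ n) (P : Type*) (dim : P → ℕ)
    (hdim : ∀ x, 1 ≤ dim x ∧ dim x ≤ n - 1)
    (σ : P → P) (hσ : ∀ x, σ (σ x) = x)
    (hσdim : ∀ x, dim (σ x) = n - dim x)
    (T : Set (P × P × P))
    (h2 : ∀ u v w, (u, v, w) ∈ T → (v, w, u) ∈ T)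
    (h3 : ∀ u v w, (u, v, w) ∈ T → n ∣ dim u + dim v + dim w)
    (h4 : ∀ u v w₁ w₂, (u, v, w₁) ∈ T → (u, v, w₂) ∈ T → w₁ = w₂)
    (h5 : ∀ u v w, (u, v, w) ∈ T → (σ w, σ v, σ u) ∈ T) :
    (∀ u v w r s, (u, v, σ r) ∈ T → (r, w, σ s) ∈ T →
        dim u + dim v + dim w < n →
        ∃! t, (u, t, σ s) ∈ T ∧ (v, w, σ t) ∈ T) ↔
      (∀ u v w t s, (u, t, σ s) ∈ T → (v, w, σ t) ∈ T →
        dim u + dim v + dim w < n →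
        ∃! r, (u, v, σ r) ∈ T ∧ (r, w, σ s) ∈ T) := by
  -- key arithmetic fact: if (a,b,σc) ∈ T and dim a + dim b < n then dim a + dim b = dim c
  have key : ∀ a b c, (a, b, σ c) ∈ T → dim a + dim b < n → dim a + dim b = dim c := by
    intro a b c H hlt
    obtain ⟨k, hk⟩ := h3 a b (σ c) H
    have h1 := hdim a
    have h2' := hdim b
    have h3' := hdim c
    have h4' := hσdim c
    rcases k with _ | _ | k
    · omega
    · omega
    · have : n * (k + 1 + 1) = n * k + 2 * n := by ring
      omega
  constructor
  · -- (6′) → (6″)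
    intro h6 u v w t s A B hlt
    have hu := hdim u
    have hvw : dim v + dim w = dim t := key v w t B (by omega)
    have hut : dim u + dim t = dim s := key u t s A (by omega)
    have A' : (t, σ s, σ (σ u)) ∈ T := by rw [hσ]; exact h2 u t (σ s) A
    have hdlt : dim v + dim w + dim (σ s) < n := by
      have := hσdim s
      have := hdim s
      omega
    obtain ⟨t₁, ⟨ht₁a, ht₁b⟩, ht₁u⟩ := h6 v w (σ s) t (σ u) B A' hdlt
    rw [hσ] at ht₁a
    refine ⟨σ t₁, ⟨?_, ?_⟩, ?_⟩
    · have : (u, v, σ (σ t₁)) ∈ T := by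
        rw [hσ]; exact h2 t₁ u v (h2 v t₁ u ht₁a)
      exact this
    · exact h2 (σ s) (σ t₁) w (h2 w (σ s) (σ t₁) ht₁b)
    · intro r' ⟨hr1, hr2⟩
      have e : σ r' = t₁ := by
        apply ht₁u
        constructor
        · rw [hσ]; exact h2 u v (σ r') hr1
        · have : (w, σ s, σ (σ r')) ∈ T := by
            rw [hσ]; exact h2 r' w (σ s) hr2
          exact this
      calc r' = σ (σ r') := (hσ r').symm
        _ = σ t₁ := by rw [e]
  · -- (6″) → (6′)
    intro h6 u v w r s A B hlt
    have hu := hdim u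
    have huv : dim u + dim v = dim r := key u v r A (by omega)
    have hrw : dim r + dim w = dim s := key r w s B (by omega)
    have A' : (v, σ r, σ (σ u)) ∈ T := by rw [hσ]; exact h2 u v (σ r) A
    have B' : (w, σ s, σ (σ r)) ∈ T := by rw [hσ]; exact h2 r w (σ s) B
    have hdlt : dim v + dim w + dim (σ s) < n := by
      have := hσdim s
      have := hdim s
      omega
    obtain ⟨r₀, ⟨hr₀a, hr₀b⟩, hr₀u⟩ := h6 v w (σ s) (σ r) (σ u) A' B' hdlt
    rw [hσ] at hr₀b
    refine ⟨r₀, ⟨?_, hr₀a⟩, ?_⟩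
    · exact h2 (σ s) u r₀ (h2 r₀ (σ s) u hr₀b)
    · intro t' ⟨ht1, ht2⟩
      apply hr₀u
      refine ⟨ht2, ?_⟩
      rw [hσ]; exact h2 u t' (σ s) ht1
end

section
/- Let p be a prime, k ≥ 1, q = p^k, and N = q² + q + 1. Let D be a finset of ZMod N with D.card = q + 1 such that every nonzero m ∈ ZMod N has a unique representation m = d₁ − d₂ with d₁, d₂ ∈ D, and suppose D is standard, i.e. {p·d : d ∈ D} = D. Define T′ := {(m, m + d, m + (q+1)·d) : m ∈ ZMod N, d ∈ D} ⊆ (ZMod N)³. Then: (a) (u,v,w) ∈ T′ implies (v,w,u) ∈ T′; (b) (u,v,w₁) ∈ T′ and (u,v,w₂) ∈ T′ imply w₁ = w₂; (c) (u₁,v,w) ∈ T′ and (u₂,v,w) ∈ T′ imply u₁ = u₂; (d) there exists w with (u,v,w) ∈ T′ if and only if v − u ∈ D. -/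
theorem stmt_5 (p k q N : ℕ) (hp : p.Prime) (hk : 1 ≤ k) (hq : q = p ^ k)
    (hN : N = q ^ 2 + q + 1) (D : Finset (ZMod N)) (hcard : D.card = q + 1)
    (hdiff : ∀ m : ZMod N, m ≠ 0 →
      ∃! dd : ZMod N × ZMod N, dd.1 ∈ D ∧ dd.2 ∈ D ∧ dd.1 - dd.2 = m)
    (hstd : D.image (fun d => (p : ZMod N) * d) = D)
    (T' : Set (ZMod N × ZMod N × ZMod N))
    (hT' : T' = {t | ∃ m : ZMod N, ∃ d ∈ D, t = (m, m + d, m + ((q : ZMod N) + 1) * d)}) :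
    (∀ u v w, (u, v, w) ∈ T' → (v, w, u) ∈ T') ∧
      (∀ u v w₁ w₂, (u, v, w₁) ∈ T' → (u, v, w₂) ∈ T' → w₁ = w₂) ∧
      (∀ u₁ u₂ v w, (u₁, v, w) ∈ T' → (u₂, v, w) ∈ T' → u₁ = u₂) ∧
      (∀ u v, (∃ w, (u, v, w) ∈ T') ↔ v - u ∈ D) := by
  subst hT'
  -- image by p^j
  have himg : ∀ j : ℕ, D.image (fun d => (p : ZMod N) ^ j * d) = D := by
    intro j
    induction j with
    | zero => simp
    | succ j ih =>
      have hcomp : (fun d : ZMod N => (p : ZMod N) ^ (j + 1) * d)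
          = (fun d => (p : ZMod N) * d) ∘ (fun d => (p : ZMod N) ^ j * d) := by
        funext d; simp [pow_succ]; ring
      rw [hcomp, ← Finset.image_image, ih, hstd]
  have hqcast : (q : ZMod N) = (p : ZMod N) ^ k := by rw [hq]; push_cast; ring
  have hqD : D.image (fun d => (q : ZMod N) * d) = D := by
    rw [hqcast] at *; exact himg k
  have hqmem : ∀ d ∈ D, (q : ZMod N) * d ∈ D := by
    intro d hd; rw [← hqD]; exact Finset.mem_image_of_mem _ hd
  have hqinj : Set.InjOn (fun d : ZMod N => (q : ZMod N) * d) D := by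
    apply Finset.injOn_of_card_image_eq
    rw [hqD]
  have hNzero : ((q : ZMod N) ^ 2 + q + 1) = 0 := by
    have h0 : ((q ^ 2 + q + 1 : ℕ) : ZMod N) = 0 := by
      rw [← hN]; exact ZMod.natCast_self N
    push_cast at h0
    linear_combination h0
  refine ⟨?_, ?_, ?_, ?_⟩
  · rintro u v w ⟨m, d, hd, heq⟩
    obtain ⟨h1, h2, h3⟩ : u = m ∧ v = m + d ∧ w = m + ((q : ZMod N) + 1) * d := by
      simpa [Prod.ext_iff] using heq
    refine ⟨m + d, (q : ZMod N) * d, hqmem d hd, ?_⟩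
    subst h1 h2 h3
    simp only [Prod.mk.injEq]
    exact ⟨trivial, by ring, by linear_combination (-d) * hNzero⟩
  · rintro u v w₁ w₂ ⟨m₁, d₁, hd₁, heq₁⟩ ⟨m₂, d₂, hd₂, heq₂⟩
    obtain ⟨h1, h2, h3⟩ : u = m₁ ∧ v = m₁ + d₁ ∧ w₁ = m₁ + ((q : ZMod N) + 1) * d₁ := by
      simpa [Prod.ext_iff] using heq₁
    obtain ⟨h4, h5, h6⟩ : u = m₂ ∧ v = m₂ + d₂ ∧ w₂ = m₂ + ((q : ZMod N) + 1) * d₂ := by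
      simpa [Prod.ext_iff] using heq₂
    have hm : m₁ = m₂ := h1 ▸ h4
    have hd : d₁ = d₂ := by
      have := h2 ▸ h5
      rw [hm] at this
      exact add_left_cancel this
    rw [h3, h6, hm, hd]
  · rintro u₁ u₂ v w ⟨m₁, d₁, hd₁, heq₁⟩ ⟨m₂, d₂, hd₂, heq₂⟩
    obtain ⟨h1, h2, h3⟩ : u₁ = m₁ ∧ v = m₁ + d₁ ∧ w = m₁ + ((q : ZMod N) + 1) * d₁ := by
      simpa [Prod.ext_iff] using heq₁
    obtain ⟨h4, h5, h6⟩ : u₂ = m₂ ∧ v = m₂ + d₂ ∧ w = m₂ + ((q : ZMod N) + 1) * d₂ := by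
      simpa [Prod.ext_iff] using heq₂
    -- w = v + q * d_i, so q d₁ = q d₂
    have hq1 : (q : ZMod N) * d₁ = (q : ZMod N) * d₂ := by
      have e1 : w = v + (q : ZMod N) * d₁ := by rw [h3, h2]; ring
      have e2 : w = v + (q : ZMod N) * d₂ := by rw [h6, h5]; ring
      have : v + (q : ZMod N) * d₁ = v + (q : ZMod N) * d₂ := e1.symm.trans e2
      exact add_left_cancel this
    have hdd : d₁ = d₂ := hqinj hd₁ hd₂ hq1
    have : m₁ = m₂ := by
      have := h2 ▸ h5
      rw [hdd] at this
      exact add_right_cancel this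
    rw [h1, h4, this]
  · intro u v
    constructor
    · rintro ⟨w, m, d, hd, heq⟩
      obtain ⟨h1, h2, h3⟩ : u = m ∧ v = m + d ∧ w = m + ((q : ZMod N) + 1) * d := by
        simpa [Prod.ext_iff] using heq
      rw [h1, h2]; simpa using hd
    · intro hvu
      exact ⟨u + ((q : ZMod N) + 1) * (v - u), u, v - u, hvu, by simp⟩
end

section
/- Let S be a finite type with Fintype.card S = m ≥ 2, let Π := {x : Finset S | x ≠ ∅ ∧ x ≠ Finset.univ}, and let σ(x) := xᶜ (complement in S). Define T′ := {(x,y,z) ∈ Π³ : x, y, z are pairwise disjoint and x ∪ y ∪ z = Finset.univ}, T″ := {(x,y,z) ∈ Π³ : (zᶜ, yᶜ, xᶜ) ∈ T′}, and T := T′ ∪ T″. Then T satisfies all the triangle-presentation axioms with n replaced by m, dim replaced by Finset.card, and incidence u ∼ v meaning u ⊆ v or v ⊆ u: (1) for u, v ∈ Π there exists w ∈ Π with (u,v,w) ∈ T iff uᶜ ≠ v and (uᶜ ⊆ v or v ⊆ uᶜ); (2) (u,v,w) ∈ T implies (v,w,u) ∈ T; (3) (u,v,w) ∈ T implies m divides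 |u| + |v| + |w|; (4) (u,v,w₁) ∈ T and (u,v,w₂) ∈ T imply w₁ = w₂; (5) (u,v,w) ∈ T implies (wᶜ, vᶜ, uᶜ) ∈ T; (6) whenever (u₁,v₁,w) ∈ T, (u₂,v₂,wᶜ) ∈ T and |uᵢ| + |vᵢ| < m for i = 1,2, there exists a unique z ∈ Π with (v₂,u₁,z) ∈ T and (v₁,u₂,zᶜ) ∈ T. -/
section AuxTriangle

variable {S : Type*} [Fintype S] [DecidableEq S]

private abbrev TPi (x : Finset S) : Prop := x ≠ ∅ ∧ x ≠ Finset.univ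

private abbrev TP (u v w : Finset S) : Prop :=
  TPi u ∧ TPi v ∧ TPi w ∧ Disjoint u v ∧ Disjoint u w ∧ Disjoint v w ∧
    u ∪ v ∪ w = Finset.univ

private lemma TPi_compl {x : Finset S} (h : TPi x) : TPi xᶜ := by
  refine ⟨fun hc => h.2 ?_, fun hc => h.1 ?_⟩
  · rwa [Finset.compl_eq_empty_iff] at hc
  · rwa [Finset.compl_eq_univ_iff] at hc

private lemma subset_compl_of_disjoint {u v : Finset S} (h : Disjoint u v) : v ⊆ uᶜ :=
  fun a ha => Finset.mem_compl.mpr (Finset.disjoint_right.mp h ha)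

private lemma disjoint_of_subset_compl {u v : Finset S} (h : v ⊆ uᶜ) : Disjoint u v :=
  Finset.disjoint_left.mpr (fun a hau hav => Finset.mem_compl.mp (h hav) hau)

private lemma compl_subset_of_disjoint_compl {u v : Finset S} (h : Disjoint uᶜ vᶜ) :
    uᶜ ⊆ v := by
  intro a ha
  by_contra hav
  exact (Finset.disjoint_left.mp h ha) (Finset.mem_compl.mpr hav)

private lemma disjoint_compl_of_subset {u v : Finset S} (h : uᶜ ⊆ v) : Disjoint uᶜ vᶜ := by
  rw [Finset.disjoint_left]
  intro a ha hav
  exact (Finset.mem_compl.mp hav) (h ha)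

private lemma compl_subset_of_union_univ {u v : Finset S} (h : u ∪ v = Finset.univ) :
    uᶜ ⊆ v := by
  intro a ha
  have h2 : a ∈ u ∪ v := by rw [h]; exact Finset.mem_univ a
  rcases Finset.mem_union.mp h2 with h3 | h3
  · exact absurd h3 (Finset.mem_compl.mp ha)
  · exact h3

private lemma TP_iff {u v w : Finset S} :
    TP u v w ↔ TPi u ∧ TPi v ∧ Disjoint u v ∧ u ∪ v ≠ Finset.univ ∧ w = (u ∪ v)ᶜ := by
  constructor
  · rintro ⟨hu, hv, hw, duv, duw, dvw, huniv⟩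
    have hwc : w = (u ∪ v)ᶜ := by
      ext a
      simp only [Finset.mem_compl, Finset.mem_union, not_or]
      constructor
      · intro haw
        exact ⟨fun hau => (Finset.disjoint_left.mp duw hau) haw,
               fun hav => (Finset.disjoint_left.mp dvw hav) haw⟩
      · rintro ⟨hau, hav⟩
        have hm : a ∈ u ∪ v ∪ w := by rw [huniv]; exact Finset.mem_univ a
        simp only [Finset.mem_union] at hm
        tauto
    refine ⟨hu, hv, duv, ?_, hwc⟩
    intro h
    apply hw.1
    rw [hwc, h, Finset.compl_univ]
  · rintro ⟨hu, hv, duv, hne, rfl⟩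
    refine ⟨hu, hv, ⟨?_, ?_⟩, duv, ?_, ?_, ?_⟩
    · intro h
      exact hne ((Finset.compl_eq_empty_iff _).mp h)
    · intro h
      have h2 := (Finset.compl_eq_univ_iff _).mp h
      exact hu.1 ((Finset.union_eq_empty.mp h2).1)
    · exact Finset.disjoint_left.mpr
        (fun a ha hc => (Finset.mem_compl.mp hc) (Finset.mem_union_left _ ha))
    · exact Finset.disjoint_left.mpr
        (fun a ha hc => (Finset.mem_compl.mp hc) (Finset.mem_union_right _ ha))
    · ext a
      simp only [Finset.mem_union, Finset.mem_compl, Finset.mem_univ, iff_true]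
      tauto

private lemma TP_rotate {u v w : Finset S} (h : TP u v w) : TP v w u := by
  obtain ⟨hu, hv, hw, duv, duw, dvw, huniv⟩ := h
  refine ⟨hv, hw, hu, dvw, duv.symm, duw.symm, ?_⟩
  rw [← huniv]
  ext a
  simp only [Finset.mem_union]
  tauto

private lemma TP_swap13 {u v w : Finset S} (h : TP u v w) : TP w v u := by
  obtain ⟨hu, hv, hw, duv, duw, dvw, huniv⟩ := h
  refine ⟨hw, hv, hu, dvw.symm, duw.symm, duv.symm, ?_⟩
  rw [← huniv]
  ext a
  simp only [Finset.mem_union]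
  tauto

private lemma TP_card {u v w : Finset S} (h : TP u v w) :
    u.card + v.card + w.card = Fintype.card S := by
  obtain ⟨hu, hv, hw, duv, duw, dvw, huniv⟩ := h
  have hd : Disjoint (u ∪ v) w := Finset.disjoint_union_left.mpr ⟨duw, dvw⟩
  have h1 : (u ∪ v ∪ w).card = Fintype.card S := by rw [huniv, Finset.card_univ]
  rwa [Finset.card_union_of_disjoint hd, Finset.card_union_of_disjoint duv] at h1

end AuxTriangle

theorem stmt_7 (S : Type*) [Fintype S] [DecidableEq S] (m : ℕ) (hm : 2 ≤ m)
    (hcard : Fintype.card S = m)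
    (T' T'' T : Set (Finset S × Finset S × Finset S))
    (hT' : T' = {t | (t.1 ≠ ∅ ∧ t.1 ≠ Finset.univ) ∧ (t.2.1 ≠ ∅ ∧ t.2.1 ≠ Finset.univ) ∧
        (t.2.2 ≠ ∅ ∧ t.2.2 ≠ Finset.univ) ∧ Disjoint t.1 t.2.1 ∧ Disjoint t.1 t.2.2 ∧
        Disjoint t.2.1 t.2.2 ∧ t.1 ∪ t.2.1 ∪ t.2.2 = Finset.univ})
    (hT'' : T'' = {t | (t.2.2ᶜ, t.2.1ᶜ, t.1ᶜ) ∈ T'})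
    (hT : T = T' ∪ T'') :
    (∀ u v : Finset S, (u ≠ ∅ ∧ u ≠ Finset.univ) → (v ≠ ∅ ∧ v ≠ Finset.univ) →
        ((∃ w, (w ≠ ∅ ∧ w ≠ Finset.univ) ∧ (u, v, w) ∈ T) ↔
          (uᶜ ≠ v ∧ (uᶜ ⊆ v ∨ v ⊆ uᶜ)))) ∧
      (∀ u v w, (u, v, w) ∈ T → (v, w, u) ∈ T) ∧
      (∀ u v w, (u, v, w) ∈ T → m ∣ u.card + v.card + w.card) ∧
      (∀ u v w₁ w₂, (u, v, w₁) ∈ T → (u, v, w₂) ∈ T → w₁ = w₂) ∧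
      (∀ u v w, (u, v, w) ∈ T → (wᶜ, vᶜ, uᶜ) ∈ T) ∧
      (∀ u₁ v₁ u₂ v₂ w, (u₁, v₁, w) ∈ T → (u₂, v₂, wᶜ) ∈ T →
        u₁.card + v₁.card < m → u₂.card + v₂.card < m →
        ∃! z, (z ≠ ∅ ∧ z ≠ Finset.univ) ∧ (v₂, u₁, z) ∈ T ∧ (v₁, u₂, zᶜ) ∈ T) := by
  have memT : ∀ a b c : Finset S, ((a, b, c) ∈ T) ↔ (TP a b c ∨ TP aᶜ bᶜ cᶜ) := by
    intro a b c
    rw [hT]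
    constructor
    · rintro (h | h)
      · left; rw [hT'] at h; exact h
      · right; rw [hT'', hT'] at h; exact TP_swap13 h
    · rintro (h | h)
      · left; rw [hT']; exact h
      · right; rw [hT'', hT']; exact TP_swap13 h
  have hle : ∀ x : Finset S, x.card ≤ m := by
    intro x
    rw [← hcard, ← Finset.card_univ]
    exact Finset.card_le_univ x
  have hpos : ∀ x : Finset S, x ≠ ∅ → 1 ≤ x.card := by
    intro x hx
    exact Finset.card_pos.mpr (Finset.nonempty_iff_ne_empty.mpr hx)
  -- key: card facts for the complemented case
  have hgt : ∀ a b c : Finset S, TP aᶜ bᶜ cᶜ → m < a.card + b.card := by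
    intro a b c h
    have hc := TP_card h
    rw [Finset.card_compl, Finset.card_compl, Finset.card_compl, hcard] at hc
    have h1 : 1 ≤ cᶜ.card := hpos _ h.2.2.1.1
    rw [Finset.card_compl, hcard] at h1
    have := hle a; have := hle b; have := hle c
    omega
  -- condition (4), needed also in (6)
  have h4 : ∀ u v w₁ w₂, (u, v, w₁) ∈ T → (u, v, w₂) ∈ T → w₁ = w₂ := by
    intro u v w₁ w₂ h1 h2
    rw [memT] at h1 h2
    rcases h1 with h1 | h1 <;> rcases h2 with h2 | h2
    · rw [TP_iff] at h1 h2
      rw [h1.2.2.2.2, h2.2.2.2.2]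
    · exfalso
      rw [TP_iff] at h1 h2
      have hd : uᶜ ⊆ v := compl_subset_of_disjoint_compl h2.2.2.1
      apply h1.2.2.2.1
      ext a
      simp only [Finset.mem_union, Finset.mem_univ, iff_true]
      by_cases hau : a ∈ u
      · exact Or.inl hau
      · exact Or.inr (hd (Finset.mem_compl.mpr hau))
    · exfalso
      rw [TP_iff] at h1 h2
      have hd : uᶜ ⊆ v := compl_subset_of_disjoint_compl h1.2.2.1
      apply h2.2.2.2.1
      ext a
      simp only [Finset.mem_union, Finset.mem_univ, iff_true]
      by_cases hau : a ∈ u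
      · exact Or.inl hau
      · exact Or.inr (hd (Finset.mem_compl.mpr hau))
    · rw [TP_iff] at h1 h2
      have := h1.2.2.2.2.trans h2.2.2.2.2.symm
      exact compl_inj_iff.mp this
  refine ⟨?_, ?_, ?_, h4, ?_, ?_⟩
  -- (1)
  · intro u v hu hv
    constructor
    · rintro ⟨w, hw, hmem⟩
      rw [memT] at hmem
      rcases hmem with h | h
      · rw [TP_iff] at h
        refine ⟨?_, Or.inr (subset_compl_of_disjoint h.2.2.1)⟩
        intro heq
        apply h.2.2.2.1
        rw [← heq]
        ext a
        simp only [Finset.mem_union, Finset.mem_compl, Finset.mem_univ, iff_true]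
        tauto
      · rw [TP_iff] at h
        refine ⟨?_, Or.inl (compl_subset_of_disjoint_compl h.2.2.1)⟩
        intro heq
        apply h.2.2.2.1
        rw [← heq]
        ext a
        simp only [Finset.mem_union, Finset.mem_compl, compl_compl, Finset.mem_univ, iff_true]
        tauto
    · rintro ⟨hne, hor | hor⟩
      · -- uᶜ ⊆ v : T'' case, w = uᶜ ∪ vᶜ
        have hTP : TP uᶜ vᶜ (uᶜ ∪ vᶜ)ᶜ := by
          rw [TP_iff]
          refine ⟨TPi_compl hu, TPi_compl hv, disjoint_compl_of_subset hor, ?_, rfl⟩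
          intro hun
          have h1 : (uᶜ)ᶜ ⊆ vᶜ := compl_subset_of_union_univ hun
          rw [compl_compl] at h1
          have h2 : v ⊆ uᶜ := fun a ha =>
            Finset.mem_compl.mpr (fun hau => Finset.mem_compl.mp (h1 hau) ha)
          exact hne (subset_antisymm hor h2)
        refine ⟨uᶜ ∪ vᶜ, ?_, ?_⟩
        · have := hTP.2.2.1
          exact ⟨fun h => this.2 (by rw [h, Finset.compl_empty]),
                 fun h => this.1 (by rw [h, Finset.compl_univ])⟩
        · rw [memT]
          right
          have : ((uᶜ ∪ vᶜ)ᶜ : Finset S) = (uᶜ ∪ vᶜ)ᶜ := rfl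
          exact hTP
      · -- v ⊆ uᶜ : T' case, w = (u ∪ v)ᶜ
        have hTP : TP u v (u ∪ v)ᶜ := by
          rw [TP_iff]
          refine ⟨hu, hv, disjoint_of_subset_compl hor, ?_, rfl⟩
          intro hun
          exact hne (subset_antisymm (compl_subset_of_union_univ hun) hor)
        refine ⟨(u ∪ v)ᶜ, hTP.2.2.1, ?_⟩
        rw [memT]
        exact Or.inl hTP
  -- (2)
  · intro u v w h
    rw [memT] at h ⊢
    rcases h with h | h
    · exact Or.inl (TP_rotate h)
    · exact Or.inr (TP_rotate h)
  -- (3)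
  · intro u v w h
    rw [memT] at h
    rcases h with h | h
    · have := TP_card h
      rw [hcard] at this
      exact ⟨1, by omega⟩
    · have hc := TP_card h
      rw [Finset.card_compl, Finset.card_compl, Finset.card_compl, hcard] at hc
      have := hle u; have := hle v; have := hle w
      exact ⟨2, by omega⟩
  -- (5)
  · intro u v w h
    rw [memT] at h ⊢
    rcases h with h | h
    · right
      simp only [compl_compl]
      exact TP_swap13 h
    · exact Or.inl (TP_swap13 h)
  -- (6)
  · intro u₁ v₁ u₂ v₂ w h1 h2 hc1 hc2
    rw [memT] at h1 h2
    have hp1 : TP u₁ v₁ w := by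
      rcases h1 with h | h
      · exact h
      · exact absurd (hgt _ _ _ h) (by omega)
    have hp2 : TP u₂ v₂ wᶜ := by
      rcases h2 with h | h
      · exact h
      · exact absurd (hgt _ _ _ h) (by omega)
    clear h1 h2
    rw [TP_iff] at hp1 hp2
    obtain ⟨hu1, hv1, d1, hun1, hw1⟩ := hp1
    obtain ⟨hu2, hv2, d2, hun2, hw2⟩ := hp2
    have hw2' : w = u₂ ∪ v₂ := by
      have := congrArg (·ᶜ) hw2
      simpa using this
    have e1 : ∀ a, a ∈ w ↔ (a ∉ u₁ ∧ a ∉ v₁) := by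
      intro a
      rw [hw1]
      simp [not_or]
    have e2 : ∀ a, a ∈ w ↔ (a ∈ u₂ ∨ a ∈ v₂) := by
      intro a
      rw [hw2']
      simp
    have d1' := Finset.disjoint_left.mp d1
    have d2' := Finset.disjoint_left.mp d2
    -- the candidate z
    set z : Finset S := v₁ ∪ u₂ with hz
    have hzc : zᶜ = (v₁ ∪ u₂)ᶜ := rfl
    have hzne : z ≠ Finset.univ := by
      obtain ⟨a, ha⟩ := Finset.nonempty_iff_ne_empty.mpr hv2.1
      intro hzu
      have haz : a ∈ z := by rw [hzu]; exact Finset.mem_univ a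
      have haw : a ∈ w := (e2 a).mpr (Or.inr ha)
      have := (e1 a).mp haw
      have hau2 : a ∉ u₂ := fun h => d2' h ha
      rw [hz] at haz
      simp only [Finset.mem_union] at haz
      tauto
    have hzTPi : TPi z := by
      refine ⟨?_, hzne⟩
      intro h
      exact hv1.1 (Finset.union_eq_empty.mp h).1
    have hA : TP v₂ u₁ z := by
      refine ⟨hv2, hu1, hzTPi, ?_, ?_, ?_, ?_⟩
      · rw [Finset.disjoint_left]
        intro a ha
        exact ((e1 a).mp ((e2 a).mpr (Or.inr ha))).1
      · rw [Finset.disjoint_left]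
        intro a ha
        have h1 := ((e1 a).mp ((e2 a).mpr (Or.inr ha))).2
        have h2 : a ∉ u₂ := fun h => d2' h ha
        simp only [hz, Finset.mem_union]
        tauto
      · rw [Finset.disjoint_left]
        intro a ha
        have h1 : a ∉ v₁ := d1' ha
        have h2 : a ∉ w := fun h => ((e1 a).mp h).1 ha
        have h3 : a ∉ u₂ := fun h => h2 ((e2 a).mpr (Or.inl h))
        simp only [hz, Finset.mem_union]
        tauto
      · ext a
        simp only [hz, Finset.mem_union, Finset.mem_univ, iff_true]
        by_cases h1 : a ∈ u₁
        · tauto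
        · by_cases h2 : a ∈ v₁
          · tauto
          · have : a ∈ w := (e1 a).mpr ⟨h1, h2⟩
            have := (e2 a).mp this
            tauto
    have hB : TP v₁ u₂ zᶜ := by
      rw [TP_iff]
      refine ⟨hv1, hu2, ?_, hzne, rfl⟩
      rw [Finset.disjoint_left]
      intro a ha hau2
      have : a ∈ w := (e2 a).mpr (Or.inl hau2)
      exact ((e1 a).mp this).2 ha
    refine ⟨z, ⟨hzTPi, (memT _ _ _).mpr (Or.inl hA), (memT _ _ _).mpr (Or.inl hB)⟩, ?_⟩
    rintro z' ⟨hz', hAz', hBz'⟩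
    exact h4 v₂ u₁ z' z hAz' ((memT _ _ _).mpr (Or.inl hA))
end

section
/- Let T be a triangle presentation compatible with σ on an n-dimensional vector space V over a finite field F with q elements (n ≥ 3). Let a satisfy 1 < a < n − 1, let z, w ∈ Π_a with z ≠ w, and let u, v ∈ Π₁. Then the two finite sets A := {(p,q′,r,s) ∈ Π_{a−1} × Π₂ × Π₁ × Π₁ : (z, σ r, σ p) ∈ T ∧ (r, u, σ q′) ∈ T ∧ (p, s, σ w) ∈ T ∧ (s, v, σ q′) ∈ T} and B := {p′ ∈ Π_{a+1} : (z, u, σ p′) ∈ T ∧ (w, v, σ p′) ∈ T} have the same cardinality, and this common cardinality is at most 1. -/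
open Module

/-- The set `Π` of proper nontrivial subspaces of `V`, as a subtype. -/
def ProjGeom (F V : Type*) [Field F] [AddCommGroup V] [Module F V] (n : ℕ) :=
  {U : Submodule F V // 0 < Module.finrank F U ∧ Module.finrank F U < n}

private theorem cardaux {α β : Type*} (hα : Subsingleton α) (hβ : Subsingleton β)
    (hab : Nonempty α → Nonempty β) (hba : Nonempty β → Nonempty α) :
    Nat.card α = Nat.card β ∧ Nat.card α ≤ 1 := by
  by_cases h : Nonempty α
  · rw [Nat.card_eq_one_iff_unique.mpr ⟨hα, h⟩, Nat.card_eq_one_iff_unique.mpr ⟨hβ, hab h⟩]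
    exact ⟨rfl, le_refl 1⟩
  · haveI := not_nonempty_iff.mp h
    haveI := not_nonempty_iff.mp (show ¬ Nonempty β from fun hb => h (hba hb))
    rw [Nat.card_of_isEmpty, Nat.card_of_isEmpty]
    exact ⟨rfl, by omega⟩

theorem stmt_8
    (F : Type*) [Field F] [Fintype F] (V : Type*) [AddCommGroup V] [Module F V]
    [FiniteDimensional F V] (q n : ℕ) (hq : Fintype.card F = q)
    (hn : Module.finrank F V = n) (hn3 : 3 ≤ n)
    (σ : ProjGeom F V n → ProjGeom F V n)
    (hσ : ∀ x, σ (σ x) = x)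
    (hσdim : ∀ x : ProjGeom F V n,
      Module.finrank F (σ x).val = n - Module.finrank F x.val)
    (T : Set (ProjGeom F V n × ProjGeom F V n × ProjGeom F V n))
    (h1 : ∀ u v : ProjGeom F V n, (∃ w, (u, v, w) ∈ T) ↔
      (σ u ≠ v ∧ ((σ u).val ≤ v.val ∨ v.val ≤ (σ u).val)))
    (h2 : ∀ u v w, (u, v, w) ∈ T → (v, w, u) ∈ T)
    (h3 : ∀ u v w, (u, v, w) ∈ T →
      n ∣ Module.finrank F u.val + Module.finrank F v.val + Module.finrank F w.val)
    (h4 : ∀ u v w₁ w₂, (u, v, w₁) ∈ T → (u, v, w₂) ∈ T → w₁ = w₂)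
    (h5 : ∀ u v w, (u, v, w) ∈ T → (σ w, σ v, σ u) ∈ T)
    (h6' : ∀ u v w r s, (u, v, σ r) ∈ T → (r, w, σ s) ∈ T →
      Module.finrank F u.val + Module.finrank F v.val + Module.finrank F w.val < n →
      ∃! t, (u, t, σ s) ∈ T ∧ (v, w, σ t) ∈ T)
    (h6'' : ∀ u t s v w, (u, t, σ s) ∈ T → (v, w, σ t) ∈ T →
      Module.finrank F u.val + Module.finrank F v.val + Module.finrank F w.val < n →
      ∃! r, (u, v, σ r) ∈ T ∧ (r, w, σ s) ∈ T)
    (a : ℕ) (ha1 : 1 < a) (ha2 : a < n - 1)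
    (z w : ProjGeom F V n) (hz : Module.finrank F z.val = a)
    (hw : Module.finrank F w.val = a) (hzw : z ≠ w)
    (u v : ProjGeom F V n) (hu : Module.finrank F u.val = 1)
    (hv : Module.finrank F v.val = 1) :
    Nat.card {x : ProjGeom F V n × ProjGeom F V n × ProjGeom F V n × ProjGeom F V n //
        Module.finrank F x.1.val = a - 1 ∧ Module.finrank F x.2.1.val = 2 ∧
        Module.finrank F x.2.2.1.val = 1 ∧ Module.finrank F x.2.2.2.val = 1 ∧
        (z, σ x.2.2.1, σ x.1) ∈ T ∧ (x.2.2.1, u, σ x.2.1) ∈ T ∧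
        (x.1, x.2.2.2, σ w) ∈ T ∧ (x.2.2.2, v, σ x.2.1) ∈ T} =
      Nat.card {p' : ProjGeom F V n // Module.finrank F p'.val = a + 1 ∧
        (z, u, σ p') ∈ T ∧ (w, v, σ p') ∈ T} ∧
    Nat.card {x : ProjGeom F V n × ProjGeom F V n × ProjGeom F V n × ProjGeom F V n //
        Module.finrank F x.1.val = a - 1 ∧ Module.finrank F x.2.1.val = 2 ∧
        Module.finrank F x.2.2.1.val = 1 ∧ Module.finrank F x.2.2.2.val = 1 ∧
        (z, σ x.2.2.1, σ x.1) ∈ T ∧ (x.2.2.1, u, σ x.2.1) ∈ T ∧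
        (x.1, x.2.2.2, σ w) ∈ T ∧ (x.2.2.2, v, σ x.2.1) ∈ T} ≤ 1 := by
  have σinj : ∀ x y, σ x = σ y → x = y := by
    intro x y h
    have := congrArg σ h
    rwa [hσ, hσ] at this
  -- extraction of lattice information from an "additive" triangle
  have extract : ∀ x y s : ProjGeom F V n, (x, y, σ s) ∈ T →
      Module.finrank F x.val + Module.finrank F y.val < n →
      x.val ≤ s.val ∧ y.val ≤ (σ x).val ∧
      Module.finrank F s.val = Module.finrank F x.val + Module.finrank F y.val := by
    intro x y s hT hlt
    have hy : y.val ≤ (σ x).val := by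
      obtain ⟨hne, hcmp⟩ := (h1 x y).mp ⟨σ s, hT⟩
      rcases hcmp with h | h
      · exfalso
        have hm := Submodule.finrank_mono h
        have hσx := hσdim x
        have := x.2.2
        omega
      · exact h
    have hdim : Module.finrank F s.val
        = Module.finrank F x.val + Module.finrank F y.val := by
      have hd := h3 x y (σ s) hT
      have hσs := hσdim s
      have h1' := s.2.1
      have h2' := s.2.2
      have h0 := x.2.1
      have h0' := y.2.1
      have := Nat.eq_of_dvd_of_lt_two_mul (by omega) hd (by omega)
      omega
    have hx : x.val ≤ s.val := by
      have hc := h2 _ _ _ (h2 _ _ _ hT)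
      obtain ⟨hne, hcmp⟩ := (h1 (σ s) x).mp ⟨y, hc⟩
      rw [hσ] at hcmp
      rcases hcmp with h | h
      · exfalso
        have hm := Submodule.finrank_mono h
        have := y.2.1
        omega
      · exact h
    exact ⟨hx, hy, hdim⟩
  have hsupzw : a + 1 ≤ Module.finrank F (z.val ⊔ w.val : Submodule F V) := by
    by_contra hcon
    push_neg at hcon
    have h1' : z.val = z.val ⊔ w.val :=
      Submodule.eq_of_le_of_finrank_le le_sup_left (by omega)
    have h2' : w.val = z.val :=
      Submodule.eq_of_le_of_finrank_le (le_sup_right.trans h1'.ge) (by omega)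
    exact hzw (Subtype.ext h2'.symm)
  have hinfzw := Submodule.finrank_sup_add_finrank_inf_eq z.val w.val
  -- the first component of any A-element is z ⊓ w
  have hAp : ∀ p r s : ProjGeom F V n,
      Module.finrank F p.val = a - 1 → Module.finrank F r.val = 1 →
      Module.finrank F s.val = 1 →
      (z, σ r, σ p) ∈ T → (p, s, σ w) ∈ T →
      (p, r, σ z) ∈ T ∧ p.val = z.val ⊓ w.val := by
    intro p r s hp hr hs hT1 hT3
    have hprz : (p, r, σ z) ∈ T := by
      have := h5 z (σ r) (σ p) hT1
      rwa [hσ, hσ] at this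
    have hx1 := extract p r z hprz (by omega)
    have hx2 := extract p s w hT3 (by omega)
    have hmono := Submodule.finrank_mono (le_inf hx1.1 hx2.1)
    refine ⟨hprz, Submodule.eq_of_le_of_finrank_le (le_inf hx1.1 hx2.1) (by omega)⟩
  refine cardaux ?_ ?_ ?_ ?_
  -- A is a subsingleton
  · constructor
    rintro ⟨⟨p₁, q₁, r₁, s₁⟩, hp₁, hq₁, hr₁, hs₁, hT₁, hU₁, hV₁, hW₁⟩
      ⟨⟨p₂, q₂, r₂, s₂⟩, hp₂, hq₂, hr₂, hs₂, hT₂, hU₂, hV₂, hW₂⟩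
    have e₁ := hAp p₁ r₁ s₁ hp₁ hr₁ hs₁ hT₁ hV₁
    have e₂ := hAp p₂ r₂ s₂ hp₂ hr₂ hs₂ hT₂ hV₂
    have hpp : p₁ = p₂ := Subtype.ext (e₁.2.trans e₂.2.symm)
    subst hpp
    have c₁ := h2 _ _ _ (h2 _ _ _ hT₁)
    have c₂ := h2 _ _ _ (h2 _ _ _ hT₂)
    have hrr : r₁ = r₂ := σinj _ _ (h4 _ _ _ _ c₁ c₂)
    subst hrr
    have hqq : q₁ = q₂ := σinj _ _ (h4 _ _ _ _ hU₁ hU₂)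
    subst hqq
    have hss : s₁ = s₂ := h4 _ _ _ _ (h2 _ _ _ hW₁) (h2 _ _ _ hW₂)
    subst hss
    rfl
  -- B is a subsingleton
  · constructor
    rintro ⟨p₁, hd₁, hz₁, hw₁⟩ ⟨p₂, hd₂, hz₂, hw₂⟩
    exact Subtype.ext (σinj _ _ (h4 _ _ _ _ hz₁ hz₂))
  -- A nonempty → B nonempty
  · rintro ⟨⟨⟨p, q', r, s⟩, hp, hq', hr, hs, hT1, hT2, hT3, hT4⟩⟩
    dsimp only at hp hq' hr hs hT1 hT2 hT3 hT4
    obtain ⟨hprz, hpval⟩ := hAp p r s hp hr hs hT1 hT3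
    have hx1 := extract p r z hprz (by omega)
    have hx2 := extract p s w hT3 (by omega)
    have hx3 := extract r u q' hT2 (by omega)
    have hx4 := extract s v q' hT4 (by omega)
    have hrs : r ≠ s := by
      rintro rfl
      exact hzw (σinj _ _ (h4 _ _ _ _ hprz hT3))
    have hmonors := Submodule.finrank_mono (inf_le_left : r.val ⊓ s.val ≤ r.val)
    have hinfrs : Module.finrank F (r.val ⊓ s.val : Submodule F V) = 0 := by
      by_contra h0
      have h1' : r.val ⊓ s.val = r.val :=
        Submodule.eq_of_le_of_finrank_le inf_le_left (by omega)
      have h2' : r.val = s.val :=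
        Submodule.eq_of_le_of_finrank_le (h1'.symm.le.trans inf_le_right) (by omega)
      exact hrs (Subtype.ext h2')
    have hsuprs := Submodule.finrank_sup_add_finrank_inf_eq r.val s.val
    have hq'eq : r.val ⊔ s.val = q'.val :=
      Submodule.eq_of_le_of_finrank_le (sup_le hx3.1 hx4.1) (by omega)
    obtain ⟨w'', hw''⟩ : ∃ w'', (p, q', w'') ∈ T := by
      apply (h1 p q').mpr
      constructor
      · intro hcon
        have hdp := hσdim p
        rw [hcon] at hdp
        omega
      · right
        rw [← hq'eq]
        exact sup_le hx1.2.1 hx2.2.1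
    have hpq' : (p, q', σ (σ w'')) ∈ T := by rw [hσ]; exact hw''
    obtain ⟨R, ⟨hR1, hR2⟩, -⟩ := h6'' p q' (σ w'') r u hpq' hT2 (by omega)
    have hRz : R = z := σinj _ _ (h4 _ _ _ _ hR1 hprz)
    rw [hRz] at hR2
    obtain ⟨R', ⟨hR1', hR2'⟩, -⟩ := h6'' p q' (σ w'') s v hpq' hT4 (by omega)
    have hRw : R' = w := σinj _ _ (h4 _ _ _ _ hR1' hT3)
    rw [hRw] at hR2'
    have hdw : Module.finrank F (σ w'').val = a + 1 := by
      have hd := h3 p q' w'' hw''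
      have h1' := w''.2.1
      have h2' := w''.2.2
      have hσw := hσdim w''
      have := Nat.eq_of_dvd_of_lt_two_mul (by omega) hd (by omega)
      omega
    exact ⟨⟨σ w'', hdw, hR2, hR2'⟩⟩
  -- B nonempty → A nonempty
  · rintro ⟨⟨p', hdp', hzT, hwT⟩⟩
    have hz' := extract z u p' hzT (by omega)
    have hw' := extract w v p' hwT (by omega)
    have hsupd := Submodule.finrank_mono (sup_le hz'.1 hw'.1)
    have hpd0 : Module.finrank F (z.val ⊓ w.val : Submodule F V) = a - 1 := by omega
    obtain ⟨p, hpv, hpd⟩ : ∃ p : ProjGeom F V n,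
        p.val = z.val ⊓ w.val ∧ Module.finrank F p.val = a - 1 :=
      ⟨⟨z.val ⊓ w.val, by constructor <;> omega⟩, rfl, hpd0⟩
    -- construct r
    obtain ⟨r, hrT⟩ : ∃ X, (σ z, p, X) ∈ T := by
      apply (h1 (σ z) p).mpr
      rw [hσ]
      refine ⟨?_, Or.inr (hpv.le.trans inf_le_left)⟩
      intro hcon
      rw [hcon] at hz
      omega
    have hrd : Module.finrank F r.val = 1 := by
      have hd := h3 (σ z) p r hrT
      have h1' := hσdim z
      have h2' := r.2.1
      have h3' := r.2.2
      have := Nat.eq_of_dvd_of_lt_two_mul (by omega) hd (by omega)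
      omega
    have hprz : (p, r, σ z) ∈ T := h2 _ _ _ hrT
    -- construct s
    obtain ⟨s, hsT⟩ : ∃ X, (σ w, p, X) ∈ T := by
      apply (h1 (σ w) p).mpr
      rw [hσ]
      refine ⟨?_, Or.inr (hpv.le.trans inf_le_right)⟩
      intro hcon
      rw [hcon] at hw
      omega
    have hsd : Module.finrank F s.val = 1 := by
      have hd := h3 (σ w) p s hsT
      have h1' := hσdim w
      have h2' := s.2.1
      have h3' := s.2.2
      have := Nat.eq_of_dvd_of_lt_two_mul (by omega) hd (by omega)
      omega
    have hpsw : (p, s, σ w) ∈ T := h2 _ _ _ hsT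
    -- construct q'
    obtain ⟨q', ⟨hpq', hruq'⟩, -⟩ := h6' p r u z p' hprz hzT (by omega)
    obtain ⟨t₂, ⟨hpt₂, hsvt₂⟩, -⟩ := h6' p s v w p' hpsw hwT (by omega)
    have ht₂ : t₂ = q' :=
      h4 _ _ _ _ (h2 _ _ _ (h2 _ _ _ hpt₂)) (h2 _ _ _ (h2 _ _ _ hpq'))
    rw [ht₂] at hsvt₂
    have hq'd : Module.finrank F q'.val = 2 := by
      have := (extract r u q' hruq' (by omega)).2.2
      omega
    have hzσ : (z, σ r, σ p) ∈ T := by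
      have := h5 p r (σ z) hprz
      rwa [hσ] at this
    exact ⟨⟨(p, q', r, s), hpd, hq'd, hrd, hsd, hzσ, hruq', hpsw, hsvt₂⟩⟩
end

section
/- Let T be a triangle presentation compatible with σ on an n-dimensional vector space V over a finite field F with q elements (n ≥ 3). Let a satisfy 1 < a < n, let z ∈ Π_a and u, v ∈ Π₁, and set A := {(p,q′,r,s) ∈ Π_{a−1} × Π₂ × Π₁ × Π₁ : (z, σ r, σ p) ∈ T ∧ (r, u, σ q′) ∈ T ∧ (p, s, σ z) ∈ T ∧ (s, v, σ q′) ∈ T}. Then: (a) if A is nonempty then u = v; (b) if there exists p′ ∈ Π_{a+1} with (z, u, σ p′) ∈ T and (z, v, σ p′) ∈ T then u = v; (c) if u = v then card A = card {r ∈ Π₁ : σ z ≤ σ r ∧ u ≤ σ r}; (d) if moreover 1 < a < n − 1, u = v, and p is a prime with q ≡ 1 (mod p), then (card A : ZMod p) = (card {p′ ∈ Π_{a+1} : (z, u, σ p′) ∈ T} : ZMod p) + (a − 1 : ZMod p). -/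
open Module

/-!
Parts (a) and (b) are uniqueness of the third vertex (axiom 4) after rotating triangles; in (a),
applying `σ` to `(z, σ r, σ p)` gives `(p, r, σ z)`, which forces `s = r`. For (c), a quadruple
in `A` is determined by `r`: `p` and `q'` are third vertices, and `s = r`. Conversely any point `r`
with `σ z, u ≤ σ r` completes to a quadruple, since axiom (1) supplies the triangles and axiom (3)
their dimensions. For (d), the `σ r` are the hyperplanes containing `σ z ⊔ u`, i.e. the lines of
its dual annihilator, of dimension `c := n - dim (σ z ⊔ u)`; so there are `1 + q + ⋯ + q^(c-1) ≡ c`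
of them. If `u ≤ σ z` then `c = a` and there is exactly one `p'`; otherwise `c = a - 1` and there
is none.
-/

section Counting

variable {K V : Type*} [Field K] [AddCommGroup V] [Module K V]

theorem Submodule.card_finrank_eq_one [Finite K] :
    Nat.card {L : Submodule K V // finrank K L = 1} =
      ∑ i ∈ Finset.range (finrank K V), Nat.card K ^ i := by
  rw [← Nat.card_congr (Projectivization.equivSubmodule K V),
    Projectivization.card_of_finrank K V rfl]

theorem Submodule.card_finrank_eq_one_le [Finite K] (U : Submodule K V) :
    Nat.card {L : Submodule K V // finrank K L = 1 ∧ L ≤ U} =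
      ∑ i ∈ Finset.range (finrank K U), Nat.card K ^ i := by
  rw [← Submodule.card_finrank_eq_one]
  refine Nat.card_congr <| .symm <|
    ((Submodule.MapSubtype.orderIso U).toEquiv.subtypeEquiv fun L => ?_).trans
      (Equiv.subtypeSubtypeEquivSubtypeInter (· ≤ U) (finrank K · = 1) |>.trans
        (Equiv.subtypeEquivRight fun _ => and_comm))
  rw [← Submodule.finrank_map_subtype_eq U L]
  rfl

theorem Submodule.card_finrank_eq_pred_ge [Finite K] [FiniteDimensional K V]
    (hV : 0 < finrank K V) (W : Submodule K V) :
    Nat.card {H : Submodule K V // finrank K H = finrank K V - 1 ∧ W ≤ H} =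
      ∑ i ∈ Finset.range (finrank K V - finrank K W), Nat.card K ^ i := by
  have hW := Subspace.finrank_add_finrank_dualAnnihilator_eq W
  rw [show finrank K V - finrank K W = finrank K W.dualAnnihilator by omega,
    ← Submodule.card_finrank_eq_one_le]
  refine Nat.card_congr <|
    (Subspace.orderIsoFiniteDimensional.toEquiv.trans OrderDual.ofDual).subtypeEquiv fun H => ?_
  have hH := Subspace.finrank_add_finrank_dualAnnihilator_eq H
  change _ ↔ finrank K H.dualAnnihilator = 1 ∧ H.dualAnnihilator ≤ W.dualAnnihilator
  rw [Subspace.dualAnnihilator_le_dualAnnihilator_iff]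
  exact and_congr_left (fun _ => by omega)

theorem Nat.cast_geom_sum_eq_of_modEq {q p : ℕ} (h : q ≡ 1 [MOD p]) (c : ℕ) :
    ((∑ i ∈ Finset.range c, q ^ i : ℕ) : ZMod p) = c := by
  simp [(ZMod.natCast_eq_natCast_iff q 1 p).mpr h]

end Counting

theorem Submodule.finrank_sup_eq_add_one_of_not_le {K V : Type*} [Field K] [AddCommGroup V]
    [Module K V] [FiniteDimensional K V] {W U : Submodule K V} (hU : finrank K U = 1)
    (h : ¬U ≤ W) : finrank K ↥(W ⊔ U) = finrank K W + 1 := by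
  have hlt : finrank K ↥(W ⊓ U) < finrank K U :=
    Submodule.finrank_lt_finrank_of_lt (inf_le_right.lt_of_ne fun he => h (he ▸ inf_le_left))
  have := Submodule.finrank_sup_add_finrank_inf_eq W U
  omega

namespace TrianglePresentation

variable {X : Type*} {σ : X → X} {T : Set (X × X × X)}

theorem mem_rotate (h2 : ∀ u v w, (u, v, w) ∈ T → (v, w, u) ∈ T) {u v w : X}
    (h : (u, v, w) ∈ T) : (w, u, v) ∈ T :=
  h2 _ _ _ (h2 _ _ _ h)

theorem eq_of_mem_of_mem (h2 : ∀ u v w, (u, v, w) ∈ T → (v, w, u) ∈ T)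
    (h4 : ∀ u v w₁ w₂, (u, v, w₁) ∈ T → (u, v, w₂) ∈ T → w₁ = w₂) {x y u v : X}
    (hu : (x, u, y) ∈ T) (hv : (x, v, y) ∈ T) : u = v :=
  h4 y x u v (mem_rotate h2 hu) (mem_rotate h2 hv)

theorem mem_of_mem_sigma (hσ : ∀ x, σ (σ x) = x)
    (h5 : ∀ u v w, (u, v, w) ∈ T → (σ w, σ v, σ u) ∈ T) {z r p : X}
    (h : (z, σ r, σ p) ∈ T) : (p, r, σ z) ∈ T := by
  simpa only [hσ] using h5 _ _ _ h

theorem eq_of_quadruple (hσ : ∀ x, σ (σ x) = x)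
    (h2 : ∀ u v w, (u, v, w) ∈ T → (v, w, u) ∈ T)
    (h4 : ∀ u v w₁ w₂, (u, v, w₁) ∈ T → (u, v, w₂) ∈ T → w₁ = w₂)
    (h5 : ∀ u v w, (u, v, w) ∈ T → (σ w, σ v, σ u) ∈ T) {z u v p q r s : X}
    (hzrp : (z, σ r, σ p) ∈ T) (hruq : (r, u, σ q) ∈ T) (hpsz : (p, s, σ z) ∈ T)
    (hsvq : (s, v, σ q) ∈ T) : u = v := by
  obtain rfl : s = r := eq_of_mem_of_mem h2 h4 hpsz (mem_of_mem_sigma hσ h5 hzrp)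
  exact eq_of_mem_of_mem h2 h4 hruq hsvq

end TrianglePresentation

namespace ProjGeom

open TrianglePresentation

variable {F V : Type*} [Field F] [AddCommGroup V] [Module F V] {n : ℕ}

theorem finrank_pos (x : ProjGeom F V n) : 0 < finrank F x.val := x.2.1

theorem finrank_lt (x : ProjGeom F V n) : finrank F x.val < n := x.2.2

theorem card_finrank_eq {k : ℕ} (hk0 : 0 < k) (hkn : k < n) (P : Submodule F V → Prop) :
    Nat.card {x : ProjGeom F V n // finrank F x.val = k ∧ P x.val} =
      Nat.card {U : Submodule F V // finrank F U = k ∧ P U} :=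
  Nat.card_congr
    { toFun x := ⟨x.1.1, x.2⟩
      invFun U := ⟨⟨U.1, by rw [U.2.1]; exact ⟨hk0, hkn⟩⟩, U.2⟩
      left_inv _ := rfl
      right_inv _ := rfl }

variable {σ : ProjGeom F V n → ProjGeom F V n}
  {T : Set (ProjGeom F V n × ProjGeom F V n × ProjGeom F V n)}

theorem card_finrank_eq_one_sigma (hσ : ∀ x, σ (σ x) = x)
    (hσdim : ∀ x : ProjGeom F V n, finrank F (σ x).val = n - finrank F x.val)
    (P : Submodule F V → Prop) :
    Nat.card {r : ProjGeom F V n // finrank F r.val = 1 ∧ P (σ r).val} =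
      Nat.card {x : ProjGeom F V n // finrank F x.val = n - 1 ∧ P x.val} := by
  refine Nat.card_congr ((⟨σ, σ, hσ, hσ⟩ : ProjGeom F V n ≃ _).subtypeEquiv fun r => ?_)
  have hr := hσdim (σ r)
  rw [hσ] at hr
  have := r.finrank_lt
  exact and_congr_left' ⟨fun h => by rw [Equiv.coe_fn_mk, hσdim, h], fun h => by
    rw [Equiv.coe_fn_mk] at h; omega⟩

theorem card_finrank_eq_one_sigma_ge [Finite F] [FiniteDimensional F V]
    (hσ : ∀ x, σ (σ x) = x)
    (hσdim : ∀ x : ProjGeom F V n, finrank F (σ x).val = n - finrank F x.val)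
    (hn : finrank F V = n) (hn1 : 1 < n) (W : Submodule F V) :
    Nat.card {r : ProjGeom F V n // finrank F r.val = 1 ∧ W ≤ (σ r).val} =
      ∑ i ∈ Finset.range (n - finrank F W), Nat.card F ^ i := by
  rw [card_finrank_eq_one_sigma hσ hσdim (W ≤ ·), card_finrank_eq (by omega) (by omega), ← hn,
    Submodule.card_finrank_eq_pred_ge (by omega)]

theorem sum_finrank_eq_of_mem
    (h3 : ∀ u v w, (u, v, w) ∈ T →
      n ∣ finrank F u.val + finrank F v.val + finrank F w.val)
    {x y w : ProjGeom F V n} (h : (x, y, w) ∈ T) :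
    finrank F x.val + finrank F y.val + finrank F w.val = n ∨
      finrank F x.val + finrank F y.val + finrank F w.val = 2 * n := by
  obtain ⟨k, hk⟩ := h3 _ _ _ h
  have := x.finrank_pos
  have := x.finrank_lt
  have := y.finrank_lt
  have := w.finrank_lt
  have hk0 : 0 < k := Nat.pos_of_ne_zero (by rintro rfl; omega)
  have hk3 : k < 3 := Nat.lt_of_mul_lt_mul_left (a := n) (by omega)
  interval_cases k <;> omega

theorem exists_mem_of_le
    (h1 : ∀ u v : ProjGeom F V n, (∃ w, (u, v, w) ∈ T) ↔
      (σ u ≠ v ∧ ((σ u).val ≤ v.val ∨ v.val ≤ (σ u).val)))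
    {x y : ProjGeom F V n} (hne : finrank F (σ x).val ≠ finrank F y.val)
    (hle : (σ x).val ≤ y.val ∨ y.val ≤ (σ x).val) : ∃ w, (x, y, w) ∈ T :=
  (h1 x y).2 ⟨fun h => hne (h ▸ rfl), hle⟩

variable (σ T) in
/-- The set `A` of the statement; its elements are `(p, q', r, s)`. -/
def quadruples (a : ℕ) (z u v : ProjGeom F V n) :
    Set (ProjGeom F V n × ProjGeom F V n × ProjGeom F V n × ProjGeom F V n) :=
  {x | finrank F x.1.val = a - 1 ∧ finrank F x.2.1.val = 2 ∧
    finrank F x.2.2.1.val = 1 ∧ finrank F x.2.2.2.val = 1 ∧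
    (z, σ x.2.2.1, σ x.1) ∈ T ∧ (x.2.2.1, u, σ x.2.1) ∈ T ∧
    (x.1, x.2.2.2, σ z) ∈ T ∧ (x.2.2.2, v, σ x.2.1) ∈ T}

theorem injOn_quadruples (hσ : ∀ x, σ (σ x) = x)
    (h2 : ∀ u v w, (u, v, w) ∈ T → (v, w, u) ∈ T)
    (h4 : ∀ u v w₁ w₂, (u, v, w₁) ∈ T → (u, v, w₂) ∈ T → w₁ = w₂)
    (h5 : ∀ u v w, (u, v, w) ∈ T → (σ w, σ v, σ u) ∈ T) (a : ℕ) (z u v : ProjGeom F V n) :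
    Set.InjOn (fun x => x.2.2.1) (quadruples σ T a z u v) := by
  rintro ⟨p, q, r, s⟩ ⟨-, -, -, -, hzrp, hruq, hpsz, -⟩
    ⟨p', q', r', s'⟩ ⟨-, -, -, -, hzrp', hruq', hpsz', -⟩ (rfl : r = r')
  obtain rfl : p = p' := Function.Involutive.injective hσ (h4 _ _ _ _ hzrp hzrp')
  obtain rfl : q = q' := Function.Involutive.injective hσ (h4 _ _ _ _ hruq hruq')
  have hprz := mem_of_mem_sigma hσ h5 hzrp
  obtain rfl : s = r := eq_of_mem_of_mem h2 h4 hpsz hprz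
  obtain rfl : s' = s := eq_of_mem_of_mem h2 h4 hpsz' hprz
  rfl

theorem surjOn_quadruples (hσ : ∀ x, σ (σ x) = x)
    (hσdim : ∀ x : ProjGeom F V n, finrank F (σ x).val = n - finrank F x.val)
    (h1 : ∀ u v : ProjGeom F V n, (∃ w, (u, v, w) ∈ T) ↔
      (σ u ≠ v ∧ ((σ u).val ≤ v.val ∨ v.val ≤ (σ u).val)))
    (h3 : ∀ u v w, (u, v, w) ∈ T →
      n ∣ finrank F u.val + finrank F v.val + finrank F w.val)
    (h5 : ∀ u v w, (u, v, w) ∈ T → (σ w, σ v, σ u) ∈ T)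
    {a : ℕ} (ha1 : 1 < a) {z u : ProjGeom F V n} (hz : finrank F z.val = a)
    (hu : finrank F u.val = 1) :
    Set.SurjOn (fun x => x.2.2.1) (quadruples σ T a z u u)
      {r | finrank F r.val = 1 ∧ (σ z).val ≤ (σ r).val ∧ u.val ≤ (σ r).val} := by
  rintro r ⟨hr, hzr, hur⟩
  have := z.finrank_lt
  obtain ⟨w, hw⟩ := exists_mem_of_le h1 (x := z) (y := σ r)
    (by rw [hσdim, hσdim, hz, hr]; omega) (Or.inl hzr)
  obtain ⟨w', hw'⟩ := exists_mem_of_le h1 (x := r) (y := u)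
    (by rw [hσdim, hr, hu]; omega) (Or.inr hur)
  have hw_dim := sum_finrank_eq_of_mem h3 hw
  have hw'_dim := sum_finrank_eq_of_mem h3 hw'
  have := w.finrank_lt
  have := w'.finrank_lt
  rw [hz, hσdim, hr] at hw_dim
  rw [hr, hu] at hw'_dim
  rw [← hσ w] at hw
  rw [← hσ w'] at hw'
  refine ⟨(σ w, σ w', r, r), ⟨?_, ?_, hr, hr, hw, hw', mem_of_mem_sigma hσ h5 hw, hw'⟩, rfl⟩ <;>
    rw [hσdim] <;> omega

variable [FiniteDimensional F V]

theorem sigma_le_of_mem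
    (h1 : ∀ u v : ProjGeom F V n, (∃ w, (u, v, w) ∈ T) ↔
      (σ u ≠ v ∧ ((σ u).val ≤ v.val ∨ v.val ≤ (σ u).val)))
    {x y w : ProjGeom F V n} (h : (x, y, w) ∈ T)
    (hlt : finrank F (σ x).val < finrank F y.val) : (σ x).val ≤ y.val :=
  ((h1 x y).1 ⟨w, h⟩).2.resolve_right fun hle => (Submodule.finrank_mono hle).not_gt hlt

theorem le_sigma_of_mem
    (h1 : ∀ u v : ProjGeom F V n, (∃ w, (u, v, w) ∈ T) ↔
      (σ u ≠ v ∧ ((σ u).val ≤ v.val ∨ v.val ≤ (σ u).val)))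
    {x y w : ProjGeom F V n} (h : (x, y, w) ∈ T)
    (hlt : finrank F y.val < finrank F (σ x).val) : y.val ≤ (σ x).val :=
  ((h1 x y).1 ⟨w, h⟩).2.resolve_left fun hle => (Submodule.finrank_mono hle).not_gt hlt

theorem mapsTo_quadruples
    (hσdim : ∀ x : ProjGeom F V n, finrank F (σ x).val = n - finrank F x.val)
    (h1 : ∀ u v : ProjGeom F V n, (∃ w, (u, v, w) ∈ T) ↔
      (σ u ≠ v ∧ ((σ u).val ≤ v.val ∨ v.val ≤ (σ u).val)))
    {a : ℕ} (ha1 : 1 < a) {z u : ProjGeom F V n} (hz : finrank F z.val = a)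
    (hu : finrank F u.val = 1) (v : ProjGeom F V n) :
    Set.MapsTo (fun x => x.2.2.1) (quadruples σ T a z u v)
      {r | finrank F r.val = 1 ∧ (σ z).val ≤ (σ r).val ∧ u.val ≤ (σ r).val} := by
  rintro ⟨p, q, r, s⟩ ⟨-, -, hr, -, hzrp, hruq, -, -⟩
  have := z.finrank_lt
  refine ⟨hr, sigma_le_of_mem h1 hzrp ?_, le_sigma_of_mem h1 hruq ?_⟩ <;>
    simp only [hσdim, hz, hr, hu] <;> omega

theorem card_quadruples (hσ : ∀ x, σ (σ x) = x)
    (hσdim : ∀ x : ProjGeom F V n, finrank F (σ x).val = n - finrank F x.val)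
    (h1 : ∀ u v : ProjGeom F V n, (∃ w, (u, v, w) ∈ T) ↔
      (σ u ≠ v ∧ ((σ u).val ≤ v.val ∨ v.val ≤ (σ u).val)))
    (h2 : ∀ u v w, (u, v, w) ∈ T → (v, w, u) ∈ T)
    (h3 : ∀ u v w, (u, v, w) ∈ T →
      n ∣ finrank F u.val + finrank F v.val + finrank F w.val)
    (h4 : ∀ u v w₁ w₂, (u, v, w₁) ∈ T → (u, v, w₂) ∈ T → w₁ = w₂)
    (h5 : ∀ u v w, (u, v, w) ∈ T → (σ w, σ v, σ u) ∈ T)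
    {a : ℕ} (ha1 : 1 < a) {z u : ProjGeom F V n} (hz : finrank F z.val = a)
    (hu : finrank F u.val = 1) :
    Nat.card (quadruples σ T a z u u) =
      Nat.card {r : ProjGeom F V n // finrank F r.val = 1 ∧
        (σ z).val ≤ (σ r).val ∧ u.val ≤ (σ r).val} :=
  Nat.card_congr <| Set.BijOn.equiv _
    ⟨mapsTo_quadruples hσdim h1 ha1 hz hu u, injOn_quadruples hσ h2 h4 h5 a z u u,
      surjOn_quadruples hσ hσdim h1 h3 h5 ha1 hz hu⟩

theorem card_third_vertex_add_eq (hσ : ∀ x, σ (σ x) = x)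
    (hσdim : ∀ x : ProjGeom F V n, finrank F (σ x).val = n - finrank F x.val)
    (h1 : ∀ u v : ProjGeom F V n, (∃ w, (u, v, w) ∈ T) ↔
      (σ u ≠ v ∧ ((σ u).val ≤ v.val ∨ v.val ≤ (σ u).val)))
    (h3 : ∀ u v w, (u, v, w) ∈ T →
      n ∣ finrank F u.val + finrank F v.val + finrank F w.val)
    (h4 : ∀ u v w₁ w₂, (u, v, w₁) ∈ T → (u, v, w₂) ∈ T → w₁ = w₂)
    {a : ℕ} (ha1 : 1 < a) (ha2 : a + 1 < n) {z u : ProjGeom F V n}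
    (hz : finrank F z.val = a) (hu : finrank F u.val = 1) :
    Nat.card {p : ProjGeom F V n // finrank F p.val = a + 1 ∧ (z, u, σ p) ∈ T} + (a - 1) =
      n - finrank F ↥((σ z).val ⊔ u.val) := by
  have hσz : finrank F (σ z).val = n - a := by rw [hσdim, hz]
  by_cases hle : u.val ≤ (σ z).val
  · obtain ⟨w, hw⟩ := exists_mem_of_le h1 (x := z) (y := u) (by omega) (Or.inr hle)
    have hw_dim := sum_finrank_eq_of_mem h3 hw
    have := w.finrank_lt
    rw [hz, hu] at hw_dim
    rw [← hσ w] at hw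
    have hσw : finrank F (σ w).val = a + 1 := by rw [hσdim]; omega
    have hone : Nat.card {p : ProjGeom F V n // finrank F p.val = a + 1 ∧ (z, u, σ p) ∈ T} = 1 :=
      Nat.card_eq_one_iff_unique.2
        ⟨⟨fun p p' => Subtype.ext (Function.Involutive.injective hσ (h4 _ _ _ _ p.2.2 p'.2.2))⟩,
          ⟨⟨σ w, hσw, hw⟩⟩⟩
    rw [hone, sup_eq_left.2 hle, hσz]
    omega
  · have : IsEmpty {p : ProjGeom F V n // finrank F p.val = a + 1 ∧ (z, u, σ p) ∈ T} :=
      ⟨fun p => hle (le_sigma_of_mem h1 p.2.2 (by omega))⟩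
    rw [Nat.card_of_isEmpty, Submodule.finrank_sup_eq_add_one_of_not_le hu hle, hσz]
    omega

end ProjGeom

theorem stmt_10_general
    (F : Type*) [Field F] [Fintype F] (V : Type*) [AddCommGroup V] [Module F V]
    [FiniteDimensional F V] (q n : ℕ) (hq : Fintype.card F = q)
    (hn : Module.finrank F V = n)
    (σ : ProjGeom F V n → ProjGeom F V n)
    (hσ : ∀ x, σ (σ x) = x)
    (hσdim : ∀ x : ProjGeom F V n,
      Module.finrank F (σ x).val = n - Module.finrank F x.val)
    (T : Set (ProjGeom F V n × ProjGeom F V n × ProjGeom F V n))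
    (h1 : ∀ u v : ProjGeom F V n, (∃ w, (u, v, w) ∈ T) ↔
      (σ u ≠ v ∧ ((σ u).val ≤ v.val ∨ v.val ≤ (σ u).val)))
    (h2 : ∀ u v w, (u, v, w) ∈ T → (v, w, u) ∈ T)
    (h3 : ∀ u v w, (u, v, w) ∈ T →
      n ∣ Module.finrank F u.val + Module.finrank F v.val + Module.finrank F w.val)
    (h4 : ∀ u v w₁ w₂, (u, v, w₁) ∈ T → (u, v, w₂) ∈ T → w₁ = w₂)
    (h5 : ∀ u v w, (u, v, w) ∈ T → (σ w, σ v, σ u) ∈ T)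
    (a : ℕ) (ha1 : 1 < a)
    (z : ProjGeom F V n) (hz : Module.finrank F z.val = a)
    (u v : ProjGeom F V n) (hu : Module.finrank F u.val = 1) :
    ((Set.Nonempty {x : ProjGeom F V n × ProjGeom F V n × ProjGeom F V n × ProjGeom F V n |
        Module.finrank F x.1.val = a - 1 ∧ Module.finrank F x.2.1.val = 2 ∧
        Module.finrank F x.2.2.1.val = 1 ∧ Module.finrank F x.2.2.2.val = 1 ∧
        (z, σ x.2.2.1, σ x.1) ∈ T ∧ (x.2.2.1, u, σ x.2.1) ∈ T ∧
        (x.1, x.2.2.2, σ z) ∈ T ∧ (x.2.2.2, v, σ x.2.1) ∈ T}) → u = v) ∧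
    ((∃ p' : ProjGeom F V n, Module.finrank F p'.val = a + 1 ∧
        (z, u, σ p') ∈ T ∧ (z, v, σ p') ∈ T) → u = v) ∧
    (u = v →
      Nat.card {x : ProjGeom F V n × ProjGeom F V n × ProjGeom F V n × ProjGeom F V n //
          Module.finrank F x.1.val = a - 1 ∧ Module.finrank F x.2.1.val = 2 ∧
          Module.finrank F x.2.2.1.val = 1 ∧ Module.finrank F x.2.2.2.val = 1 ∧
          (z, σ x.2.2.1, σ x.1) ∈ T ∧ (x.2.2.1, u, σ x.2.1) ∈ T ∧
          (x.1, x.2.2.2, σ z) ∈ T ∧ (x.2.2.2, v, σ x.2.1) ∈ T} =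
        Nat.card {r : ProjGeom F V n // Module.finrank F r.val = 1 ∧
          (σ z).val ≤ (σ r).val ∧ u.val ≤ (σ r).val}) ∧
    (a < n - 1 → u = v → ∀ p : ℕ, p.Prime → q ≡ 1 [MOD p] →
      (Nat.card {x : ProjGeom F V n × ProjGeom F V n × ProjGeom F V n × ProjGeom F V n //
          Module.finrank F x.1.val = a - 1 ∧ Module.finrank F x.2.1.val = 2 ∧
          Module.finrank F x.2.2.1.val = 1 ∧ Module.finrank F x.2.2.2.val = 1 ∧
          (z, σ x.2.2.1, σ x.1) ∈ T ∧ (x.2.2.1, u, σ x.2.1) ∈ T ∧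
          (x.1, x.2.2.2, σ z) ∈ T ∧ (x.2.2.2, v, σ x.2.1) ∈ T} : ZMod p) =
        (Nat.card {p' : ProjGeom F V n // Module.finrank F p'.val = a + 1 ∧
          (z, u, σ p') ∈ T} : ZMod p) + ((a - 1 : ℕ) : ZMod p)) := by
  refine ⟨fun ⟨_, _, _, _, _, hzrp, hruq, hpsz, hsvq⟩ =>
      TrianglePresentation.eq_of_quadruple hσ h2 h4 h5 hzrp hruq hpsz hsvq,
    fun ⟨_, _, hzu, hzv⟩ => TrianglePresentation.eq_of_mem_of_mem h2 h4 hzu hzv, ?_, ?_⟩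
  · rintro rfl
    exact ProjGeom.card_quadruples hσ hσdim h1 h2 h3 h4 h5 ha1 hz hu
  rintro ha2' rfl p - hmod
  have hlines : Nat.card {r : ProjGeom F V n // finrank F r.val = 1 ∧
      (σ z).val ≤ (σ r).val ∧ u.val ≤ (σ r).val} =
      ∑ i ∈ Finset.range (n - finrank F ↥((σ z).val ⊔ u.val)), q ^ i := by
    simp_rw [← sup_le_iff, ← hq, ← Nat.card_eq_fintype_card]
    exact ProjGeom.card_finrank_eq_one_sigma_ge hσ hσdim hn (by omega) _
  change (Nat.card (ProjGeom.quadruples σ T a z u u) : ZMod p) = _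
  rw [ProjGeom.card_quadruples hσ hσdim h1 h2 h3 h4 h5 ha1 hz hu, hlines,
    Nat.cast_geom_sum_eq_of_modEq hmod,
    ← ProjGeom.card_third_vertex_add_eq hσ hσdim h1 h3 h4 ha1 (by omega) hz hu, Nat.cast_add]

theorem stmt_10
    (F : Type*) [Field F] [Fintype F] (V : Type*) [AddCommGroup V] [Module F V]
    [FiniteDimensional F V] (q n : ℕ) (hq : Fintype.card F = q)
    (hn : Module.finrank F V = n) (hn3 : 3 ≤ n)
    (σ : ProjGeom F V n → ProjGeom F V n)
    (hσ : ∀ x, σ (σ x) = x)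
    (hσdim : ∀ x : ProjGeom F V n,
      Module.finrank F (σ x).val = n - Module.finrank F x.val)
    (T : Set (ProjGeom F V n × ProjGeom F V n × ProjGeom F V n))
    (h1 : ∀ u v : ProjGeom F V n, (∃ w, (u, v, w) ∈ T) ↔
      (σ u ≠ v ∧ ((σ u).val ≤ v.val ∨ v.val ≤ (σ u).val)))
    (h2 : ∀ u v w, (u, v, w) ∈ T → (v, w, u) ∈ T)
    (h3 : ∀ u v w, (u, v, w) ∈ T →
      n ∣ Module.finrank F u.val + Module.finrank F v.val + Module.finrank F w.val)
    (h4 : ∀ u v w₁ w₂, (u, v, w₁) ∈ T → (u, v, w₂) ∈ T → w₁ = w₂)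
    (h5 : ∀ u v w, (u, v, w) ∈ T → (σ w, σ v, σ u) ∈ T)
    (h6' : ∀ u v w r s, (u, v, σ r) ∈ T → (r, w, σ s) ∈ T →
      Module.finrank F u.val + Module.finrank F v.val + Module.finrank F w.val < n →
      ∃! t, (u, t, σ s) ∈ T ∧ (v, w, σ t) ∈ T)
    (h6'' : ∀ u t s v w, (u, t, σ s) ∈ T → (v, w, σ t) ∈ T →
      Module.finrank F u.val + Module.finrank F v.val + Module.finrank F w.val < n →
      ∃! r, (u, v, σ r) ∈ T ∧ (r, w, σ s) ∈ T)
    (a : ℕ) (ha1 : 1 < a) (ha2 : a < n)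
    (z : ProjGeom F V n) (hz : Module.finrank F z.val = a)
    (u v : ProjGeom F V n) (hu : Module.finrank F u.val = 1)
    (hv : Module.finrank F v.val = 1) :
    ((Set.Nonempty {x : ProjGeom F V n × ProjGeom F V n × ProjGeom F V n × ProjGeom F V n |
        Module.finrank F x.1.val = a - 1 ∧ Module.finrank F x.2.1.val = 2 ∧
        Module.finrank F x.2.2.1.val = 1 ∧ Module.finrank F x.2.2.2.val = 1 ∧
        (z, σ x.2.2.1, σ x.1) ∈ T ∧ (x.2.2.1, u, σ x.2.1) ∈ T ∧
        (x.1, x.2.2.2, σ z) ∈ T ∧ (x.2.2.2, v, σ x.2.1) ∈ T}) → u = v) ∧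
    ((∃ p' : ProjGeom F V n, Module.finrank F p'.val = a + 1 ∧
        (z, u, σ p') ∈ T ∧ (z, v, σ p') ∈ T) → u = v) ∧
    (u = v →
      Nat.card {x : ProjGeom F V n × ProjGeom F V n × ProjGeom F V n × ProjGeom F V n //
          Module.finrank F x.1.val = a - 1 ∧ Module.finrank F x.2.1.val = 2 ∧
          Module.finrank F x.2.2.1.val = 1 ∧ Module.finrank F x.2.2.2.val = 1 ∧
          (z, σ x.2.2.1, σ x.1) ∈ T ∧ (x.2.2.1, u, σ x.2.1) ∈ T ∧
          (x.1, x.2.2.2, σ z) ∈ T ∧ (x.2.2.2, v, σ x.2.1) ∈ T} =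
        Nat.card {r : ProjGeom F V n // Module.finrank F r.val = 1 ∧
          (σ z).val ≤ (σ r).val ∧ u.val ≤ (σ r).val}) ∧
    (a < n - 1 → u = v → ∀ p : ℕ, p.Prime → q ≡ 1 [MOD p] →
      (Nat.card {x : ProjGeom F V n × ProjGeom F V n × ProjGeom F V n × ProjGeom F V n //
          Module.finrank F x.1.val = a - 1 ∧ Module.finrank F x.2.1.val = 2 ∧
          Module.finrank F x.2.2.1.val = 1 ∧ Module.finrank F x.2.2.2.val = 1 ∧
          (z, σ x.2.2.1, σ x.1) ∈ T ∧ (x.2.2.1, u, σ x.2.1) ∈ T ∧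
          (x.1, x.2.2.2, σ z) ∈ T ∧ (x.2.2.2, v, σ x.2.1) ∈ T} : ZMod p) =
        (Nat.card {p' : ProjGeom F V n // Module.finrank F p'.val = a + 1 ∧
          (z, u, σ p') ∈ T} : ZMod p) + ((a - 1 : ℕ) : ZMod p)) :=
  stmt_10_general F V q n hq hn σ hσ hσdim T h1 h2 h3 h4 h5 a ha1 z hz u v hu
end

section
/- Let T be a triangle presentation compatible with σ on an n-dimensional vector space V over a finite field F with q elements (n ≥ 3). Let a, b ≥ 1 with a + b < n and let u ∈ Π_{a+b}. Then card {(v,w) ∈ Π_a × Π_b : (v, w, σ u) ∈ T} = card {W : Submodule F V | σ u ≤ W ∧ finrank W = n − b}; in particular, for any prime p with q ≡ 1 (mod p), (card {(v,w) ∈ Π_a × Π_b : (v, w, σ u) ∈ T} : ZMod p) = (Nat.choose (a+b) a : ZMod p). -/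
open Module

/-- Gaussian binomial coefficient (recursively defined). -/
def gbin (q : ℕ) : ℕ → ℕ → ℕ
  | _, 0 => 1
  | 0, _+1 => 0
  | m+1, k+1 => gbin q m k + q^(k+1) * gbin q m (k+1)

lemma gbin_zero_right (q m : ℕ) : gbin q m 0 = 1 := by cases m <;> rfl

lemma gbin_of_lt (q : ℕ) : ∀ m k : ℕ, m < k → gbin q m k = 0 := by
  intro m
  induction m with
  | zero => intro k hk; cases k with
    | zero => omega
    | succ k => rfl
  | succ m ih =>
    intro k hk
    cases k with
    | zero => omega
    | succ k => simp only [gbin]; rw [ih k (by omega), ih (k+1) (by omega)]; ring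

lemma gbin_self (q m : ℕ) : gbin q m m = 1 := by
  induction m with
  | zero => rfl
  | succ m ih => simp only [gbin]; rw [ih, gbin_of_lt q m (m+1) (by omega)]; ring

lemma gbin_modEq (q : ℕ) (hq : 1 ≤ q) : ∀ m k : ℕ, gbin q m k ≡ m.choose k [MOD q-1] := by
  have hq1 : 1 ≡ q [MOD q - 1] := (Nat.modEq_iff_dvd' hq).mpr dvd_rfl
  intro m
  induction m with
  | zero => intro k; cases k with
    | zero => rfl
    | succ k => rfl
  | succ m ih =>
    intro k
    cases k with
    | zero => rfl
    | succ k =>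
      simp only [gbin, Nat.choose_succ_succ]
      refine Nat.ModEq.add (ih k) ?_
      calc q^(k+1) * gbin q m (k+1) ≡ 1^(k+1) * m.choose (k+1) [MOD q-1] :=
            Nat.ModEq.mul (Nat.ModEq.pow _ hq1.symm) (ih (k+1))
        _ = m.choose (k+1) := by ring

lemma prodA (q : ℤ) (m k : ℕ) :
    ∏ i ∈ Finset.range (k+1), (q^(m+1) - q^i)
      = (q^(m+1) - 1) * q^k * ∏ i ∈ Finset.range k, (q^m - q^i) := by
  rw [Finset.prod_range_succ']
  have h : ∀ i ∈ Finset.range k, q^(m+1) - q^(i+1) = q * (q^m - q^i) := by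
    intro i _; ring
  rw [Finset.prod_congr rfl h, Finset.prod_mul_distrib, Finset.prod_const,
      Finset.card_range, pow_zero]
  ring

lemma gbin_mul (q : ℕ) : ∀ m k : ℕ, k ≤ m →
    (gbin q m k : ℤ) * ∏ i ∈ Finset.range k, ((q:ℤ)^k - (q:ℤ)^i)
      = ∏ i ∈ Finset.range k, ((q:ℤ)^m - (q:ℤ)^i) := by
  intro m
  induction m with
  | zero => intro k hk; interval_cases k; simp [gbin_zero_right]
  | succ m ih =>
    intro k hk
    cases k with
    | zero => simp [gbin_zero_right]
    | succ k =>
      rcases Nat.lt_or_ge k m with hkm | hkm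
      · have I1 := ih k (by omega)
        have I2 := ih (k+1) (by omega)
        rw [prodA, Finset.prod_range_succ] at I2
        rw [prodA (q:ℤ) m k, prodA (q:ℤ) k k]
        simp only [gbin]
        push_cast
        linear_combination (((q:ℤ)^(k+1)-1) * (q:ℤ)^k) * I1 + (q:ℤ)^(k+1) * I2
      · have : k + 1 = m + 1 := by omega
        rw [this, gbin_self]
        push_cast
        ring


lemma span_of_li {F V' : Type*} [Field F] [AddCommGroup V'] [Module F V']
    [FiniteDimensional F V'] {k : ℕ} (W : Submodule F V') (hW : finrank F W = k)
    (s : Fin k → W) (hs : LinearIndependent F s) :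
    Submodule.span F (Set.range fun i => (s i : V')) = W := by
  have htop : Submodule.span F (Set.range s) = ⊤ :=
    hs.span_eq_top_of_card_eq_finrank' (by simp [hW])
  rw [show (fun i => (s i : V')) = W.subtype ∘ s from rfl, Set.range_comp,
      ← Submodule.map_span, htop, Submodule.map_top, Submodule.range_subtype]

lemma card_subspaces_mul (F : Type*) [Field F] [Fintype F] (V' : Type*) [AddCommGroup V']
    [Module F V'] [FiniteDimensional F V'] (k : ℕ) (hk : k ≤ finrank F V') :
    Nat.card {W : Submodule F V' // finrank F W = k} *
      ∏ i : Fin k, (Fintype.card F ^ k - Fintype.card F ^ i.val) =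
    ∏ i : Fin k, (Fintype.card F ^ finrank F V' - Fintype.card F ^ i.val) := by
  haveI : Finite V' := Module.finite_of_finite F
  haveI : Finite (Submodule F V') :=
    Finite.of_injective _ (SetLike.coe_injective (A := Submodule F V'))
  rw [← card_linearIndependent hk]
  have key : Nat.card (Σ W : {W : Submodule F V' // finrank F W = k},
      {s : Fin k → W.1 // LinearIndependent F s})
      = Nat.card {s : Fin k → V' // LinearIndependent F s} := by
    apply Nat.card_eq_of_bijective
      (fun x => ⟨fun i => (x.2.1 i : V'),
        x.2.2.map' x.1.1.subtype (Submodule.ker_subtype _)⟩)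
    constructor
    · rintro ⟨⟨W₁, hW₁⟩, s₁, hs₁⟩ ⟨⟨W₂, hW₂⟩, s₂, hs₂⟩ h
      have hval : (fun i => (s₁ i : V')) = fun i => (s₂ i : V') := congrArg Subtype.val h
      have hWeq : W₁ = W₂ := by
        rw [← span_of_li W₁ hW₁ s₁ hs₁, ← span_of_li W₂ hW₂ s₂ hs₂, hval]
      subst hWeq
      have hs : s₁ = s₂ := funext fun i => Subtype.ext (congrFun hval i)
      subst hs
      rfl
    · rintro ⟨s, hs⟩
      refine ⟨⟨⟨Submodule.span F (Set.range s), by rw [finrank_span_eq_card hs]; simp⟩,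
        ⟨fun i => ⟨s i, Submodule.subset_span (Set.mem_range_self i)⟩, ?_⟩⟩, ?_⟩
      · exact LinearIndependent.of_comp (Submodule.span F (Set.range s)).subtype hs
      · exact Subtype.ext rfl
  rw [← key]
  haveI : Fintype {W : Submodule F V' // finrank F W = k} := Fintype.ofFinite _
  haveI : ∀ W : {W : Submodule F V' // finrank F W = k},
      Fintype {s : Fin k → W.1 // LinearIndependent F s} := fun W => Fintype.ofFinite _
  rw [Nat.card_eq_fintype_card, Nat.card_eq_fintype_card, Fintype.card_sigma]
  have fiber : ∀ W : {W : Submodule F V' // finrank F W = k},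
      Fintype.card {s : Fin k → W.1 // LinearIndependent F s}
        = ∏ i : Fin k, (Fintype.card F ^ k - Fintype.card F ^ i.val) := by
    intro W
    rw [← Nat.card_eq_fintype_card, card_linearIndependent (le_of_eq W.2.symm), W.2]
  rw [Finset.sum_congr rfl fun W _ => fiber W, Finset.sum_const, Finset.card_univ,
      smul_eq_mul]


lemma finrank_comap_mkQ {F V : Type*} [Field F] [AddCommGroup V] [Module F V]
    [FiniteDimensional F V] (p : Submodule F V) (U : Submodule F (V ⧸ p)) :
    finrank F (U.comap p.mkQ) = finrank F U + finrank F p := by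
  set f := p.mkQ.comp (U.comap p.mkQ).subtype with hf
  have hle : p ≤ U.comap p.mkQ := by
    intro x hx
    show p.mkQ x ∈ U
    rw [show p.mkQ x = 0 from (Submodule.Quotient.mk_eq_zero p).mpr hx]
    exact U.zero_mem
  have h1 : LinearMap.range f = U := by
    rw [hf, LinearMap.range_comp, Submodule.range_subtype,
        Submodule.map_comap_eq_of_surjective p.mkQ_surjective]
  have h2 : LinearMap.ker f = p.comap (U.comap p.mkQ).subtype := by
    rw [hf, LinearMap.ker_comp, Submodule.ker_mkQ]
  have h3 := LinearMap.finrank_range_add_finrank_ker f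
  rw [h1, h2] at h3
  have h4 : finrank F (p.comap (U.comap p.mkQ).subtype) = finrank F p :=
    (Submodule.comapSubtypeEquivOfLe hle).finrank_eq
  omega

lemma card_up {F V : Type*} [Field F] [AddCommGroup V] [Module F V]
    [FiniteDimensional F V] (p : Submodule F V) (r : ℕ) :
    Nat.card {W : Submodule F V // p ≤ W ∧ finrank F W = finrank F p + r} =
    Nat.card {U : Submodule F (V ⧸ p) // finrank F U = r} := by
  symm
  have hmem : ∀ U : {U : Submodule F (V ⧸ p) // finrank F U = r},
      p ≤ U.1.comap p.mkQ ∧ finrank F (U.1.comap p.mkQ) = finrank F p + r := by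
    intro U
    constructor
    · intro x hx
      show p.mkQ x ∈ U.1
      rw [show p.mkQ x = 0 from (Submodule.Quotient.mk_eq_zero p).mpr hx]
      exact U.1.zero_mem
    · rw [finrank_comap_mkQ p U.1, U.2]; ring
  apply Nat.card_eq_of_bijective (fun U => ⟨U.1.comap p.mkQ, hmem U⟩)
  constructor
  · rintro ⟨U₁, h₁⟩ ⟨U₂, h₂⟩ h
    have := congrArg Subtype.val h
    exact Subtype.ext (Submodule.comap_injective_of_surjective p.mkQ_surjective this)
  · rintro ⟨W, hpW, hrW⟩
    have hcm : (W.map p.mkQ).comap p.mkQ = W := by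
      rw [Submodule.comap_map_eq, Submodule.ker_mkQ, sup_eq_left.mpr hpW]
    have hr := finrank_comap_mkQ p (W.map p.mkQ)
    rw [hcm] at hr
    exact ⟨⟨W.map p.mkQ, by omega⟩, Subtype.ext hcm⟩


theorem stmt_11
    (F : Type*) [Field F] [Fintype F] (V : Type*) [AddCommGroup V] [Module F V]
    [FiniteDimensional F V] (q n : ℕ) (hq : Fintype.card F = q)
    (hn : Module.finrank F V = n) (hn3 : 3 ≤ n)
    (σ : ProjGeom F V n → ProjGeom F V n)
    (hσ : ∀ x, σ (σ x) = x)
    (hσdim : ∀ x : ProjGeom F V n,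
      Module.finrank F (σ x).val = n - Module.finrank F x.val)
    (T : Set (ProjGeom F V n × ProjGeom F V n × ProjGeom F V n))
    (h1 : ∀ u v : ProjGeom F V n, (∃ w, (u, v, w) ∈ T) ↔
      (σ u ≠ v ∧ ((σ u).val ≤ v.val ∨ v.val ≤ (σ u).val)))
    (h2 : ∀ u v w, (u, v, w) ∈ T → (v, w, u) ∈ T)
    (h3 : ∀ u v w, (u, v, w) ∈ T →
      n ∣ Module.finrank F u.val + Module.finrank F v.val + Module.finrank F w.val)
    (h4 : ∀ u v w₁ w₂, (u, v, w₁) ∈ T → (u, v, w₂) ∈ T → w₁ = w₂)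
    (h5 : ∀ u v w, (u, v, w) ∈ T → (σ w, σ v, σ u) ∈ T)
    (a b : ℕ) (ha : 1 ≤ a) (hb : 1 ≤ b) (hab : a + b < n)
    (u : ProjGeom F V n) (hu : Module.finrank F u.val = a + b) :
    Nat.card {vw : ProjGeom F V n × ProjGeom F V n //
        Module.finrank F vw.1.val = a ∧ Module.finrank F vw.2.val = b ∧
        (vw.1, vw.2, σ u) ∈ T} =
      Nat.card {W : Submodule F V // (σ u).val ≤ W ∧ Module.finrank F W = n - b} ∧
    (∀ p : ℕ, p.Prime → q ≡ 1 [MOD p] →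
      (Nat.card {vw : ProjGeom F V n × ProjGeom F V n //
          Module.finrank F vw.1.val = a ∧ Module.finrank F vw.2.val = b ∧
          (vw.1, vw.2, σ u) ∈ T} : ZMod p) = (Nat.choose (a + b) a : ZMod p)) := by
  have hp : finrank F (σ u).val = n - (a + b) := by rw [hσdim u, hu]
  have part1 : Nat.card {vw : ProjGeom F V n × ProjGeom F V n //
        Module.finrank F vw.1.val = a ∧ Module.finrank F vw.2.val = b ∧
        (vw.1, vw.2, σ u) ∈ T} =
      Nat.card {W : Submodule F V // (σ u).val ≤ W ∧ Module.finrank F W = n - b} := by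
    have hmem : ∀ x : {vw : ProjGeom F V n × ProjGeom F V n //
        Module.finrank F vw.1.val = a ∧ Module.finrank F vw.2.val = b ∧
        (vw.1, vw.2, σ u) ∈ T},
        (σ u).val ≤ (σ x.1.2).val ∧ finrank F (σ x.1.2).val = n - b := by
      intro x
      obtain ⟨hva, hwb, hT⟩ := x.2
      have hrk : finrank F (σ x.1.2).val = n - b := by rw [hσdim, hwb]
      have hcmp := (h1 x.1.2 (σ u)).mp ⟨x.1.1, h2 _ _ _ hT⟩
      rcases hcmp.2 with hle | hle
      · exfalso
        have hmono := Submodule.finrank_mono hle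
        rw [hrk, hp] at hmono
        omega
      · exact ⟨hle, hrk⟩
    apply Nat.card_eq_of_bijective (fun x => ⟨(σ x.1.2).val, hmem x⟩)
    constructor
    · rintro ⟨⟨v₁, w₁⟩, hx⟩ ⟨⟨v₂, w₂⟩, hy⟩ h
      have hval := congrArg Subtype.val h
      have hww : σ w₁ = σ w₂ := Subtype.ext hval
      have hw : w₁ = w₂ := by
        have hc := congrArg σ hww
        rwa [hσ, hσ] at hc
      subst hw
      have hv : v₁ = v₂ := h4 w₁ (σ u) v₁ v₂ (h2 _ _ _ hx.2.2) (h2 _ _ _ hy.2.2)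
      subst hv; rfl
    · rintro ⟨W, hleW, hrkW⟩
      have hW' : 0 < finrank F W ∧ finrank F W < n := by rw [hrkW]; omega
      set w' : ProjGeom F V n := ⟨W, hW'⟩ with hw'def
      have hσw' : σ (σ w') = w' := hσ w'
      have hne : σ (σ w') ≠ σ u := by
        rw [hσw']
        intro hcon
        have hcc := congrArg (fun z : ProjGeom F V n => finrank F z.val) hcon
        rw [show finrank F (⟨W, hW'⟩ : ProjGeom F V n).val = finrank F W from rfl,
            hrkW, hp] at hcc
        omega
      have hex : ∃ x, (σ w', σ u, x) ∈ T := by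
        rw [h1 (σ w') (σ u)]
        refine ⟨hne, Or.inr ?_⟩
        rw [hσw']
        exact hleW
      obtain ⟨x, hx⟩ := hex
      have hx2 : (x, σ w', σ u) ∈ T := h2 _ _ _ (h2 _ _ _ hx)
      have hdw : finrank F (σ w').val = b := by
        rw [hσdim w']
        rw [show finrank F w'.val = finrank F W from rfl, hrkW]
        omega
      have hdx : finrank F x.val = a := by
        have hxb := x.2
        obtain ⟨c, hc⟩ := h3 _ _ _ hx
        rw [hdw, hp] at hc
        have hc1 : c = 1 := by
          rcases Nat.lt_or_ge c 2 with hlt | hge2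
          · interval_cases c <;> omega
          · exfalso
            have hge : n * 2 ≤ n * c := Nat.mul_le_mul_left n hge2
            omega
        rw [hc1, Nat.mul_one] at hc
        omega
      refine ⟨⟨(x, σ w'), ⟨hdx, hdw, hx2⟩⟩, Subtype.ext ?_⟩
      show ((σ (σ w')).val : Submodule F V) = W
      rw [hσw']
  refine ⟨part1, ?_⟩
  intro pp hpprime hqmod
  rw [part1]
  have hq2 : 1 < q := hq ▸ Fintype.one_lt_card
  have hquot : finrank F (V ⧸ (σ u).val) = a + b := by
    have hh := Submodule.finrank_quotient_add_finrank (σ u).val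
    rw [hn, hp] at hh
    omega
  have hcards : Nat.card {W : Submodule F V // (σ u).val ≤ W ∧ finrank F W = n - b}
      = Nat.card {U : Submodule F (V ⧸ (σ u).val) // finrank F U = a} := by
    have e : ∀ W : Submodule F V, ((σ u).val ≤ W ∧ finrank F W = n - b) ↔
        ((σ u).val ≤ W ∧ finrank F W = finrank F (σ u).val + a) := by
      intro W
      rw [hp]
      constructor <;> (rintro ⟨ha1, ha2⟩; exact ⟨ha1, by omega⟩)
    rw [Nat.card_congr (Equiv.subtypeEquivRight e), card_up]
  have hNN := card_subspaces_mul F (V ⧸ (σ u).val) a (by rw [hquot]; omega)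
  rw [hquot, hq, Fin.prod_univ_eq_prod_range (fun i => q^a - q^i) a,
      Fin.prod_univ_eq_prod_range (fun i => q^(a+b) - q^i) a] at hNN
  have hcast : ∀ m k : ℕ, k ≤ m → ((∏ i ∈ Finset.range k, (q^m - q^i) : ℕ) : ℤ)
      = ∏ i ∈ Finset.range k, ((q:ℤ)^m - (q:ℤ)^i) := by
    intro m k hkm
    rw [Nat.cast_prod]
    refine Finset.prod_congr rfl fun i hi => ?_
    rw [Nat.cast_sub (Nat.pow_le_pow_right (by omega)
      (le_trans (le_of_lt (Finset.mem_range.mp hi)) hkm))]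
    push_cast; ring
  have hZ : (Nat.card {U : Submodule F (V ⧸ (σ u).val) // finrank F U = a} : ℤ) *
      ∏ i ∈ Finset.range a, ((q:ℤ)^a - (q:ℤ)^i)
      = ∏ i ∈ Finset.range a, ((q:ℤ)^(a+b) - (q:ℤ)^i) := by
    have hcc := congrArg (Nat.cast : ℕ → ℤ) hNN
    rw [Nat.cast_mul, hcast a a le_rfl, hcast (a+b) a (by omega)] at hcc
    exact hcc
  have hGB := gbin_mul q (a+b) a (by omega)
  have hPk0 : (∏ i ∈ Finset.range a, ((q:ℤ)^a - (q:ℤ)^i)) ≠ 0 := by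
    rw [← hcast a a le_rfl]
    have hpos : 0 < ∏ i ∈ Finset.range a, (q^a - q^i) := Finset.prod_pos fun i hi =>
      Nat.sub_pos_of_lt (Nat.pow_lt_pow_right hq2 (Finset.mem_range.mp hi))
    exact_mod_cast hpos.ne'
  have hNg : Nat.card {U : Submodule F (V ⧸ (σ u).val) // finrank F U = a}
      = gbin q (a+b) a := by
    have hcc := mul_right_cancel₀ hPk0 (hZ.trans hGB.symm)
    exact_mod_cast hcc
  rw [hcards, hNg]
  have hmod : gbin q (a+b) a ≡ (a+b).choose a [MOD pp] :=
    (gbin_modEq q (by omega) (a+b) a).of_dvd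
      ((Nat.modEq_iff_dvd' (by omega)).mp hqmod.symm)
  exact (ZMod.natCast_eq_natCast_iff _ _ _).mpr hmod
end

section
/- Let (P, L) be a finite projective plane of order q with point-line membership relation ∈, let σ : P ≃ L be a bijection, and let T ⊆ P × P × P satisfy: (i) for u, v ∈ P there exists w with (u,v,w) ∈ T iff v ∈ σ(u); (ii) (u,v,w) ∈ T implies (v,w,u) ∈ T; (iii) (u,v,w₁),(u,v,w₂) ∈ T imply w₁ = w₂; (iv) (u₁,v,w),(u₂,v,w) ∈ T imply u₁ = u₂. Let 𝕜 be a field of prime characteristic p with q ≡ 1 (mod p), let V := P → 𝕜 with standard basis (e_u), and let Ř : V ⊗[𝕜] V → V ⊗[𝕜] V be the 𝕜-linear map defined on basis vectors by: Ř(e_u ⊗ e_v) = ∑ over pairs (z,w) ∈ P × P with (z,w) ≠ (u,v) and ∃ s ∈ P, (u,v,s) ∈ T ∧ (z,w,s) ∈ T, of e_z ⊗ e_w, whenever v ∈ σ(u); and Ř(e_u ⊗ e_v) = −(e_u ⊗ e_v) whenever v ∉ σ(u). Then Ř is involutive: Ř ∘ Ř = id on V ⊗[𝕜] V. -/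
/-!
Fix `s`. The pairs `(z, w)` with `(z, w, s) ∈ T` form a block `A_s`, and by (iii) the blocks
partition the pairs `(u, v)` with `v ∈ σ u`. On a block, `Ř` sends `x_a` to `S - x_a`, where `S`
is the sum of the block, so `Ř (Ř x_a) = (|A_s| - 2) • S + x_a`. By (i), (ii), (iv) the block
`A_s` is in bijection with the lines `σ w` through `s`, so `|A_s| = q + 1 ≡ 2 (mod p)` and
`Ř² = id` there; off the blocks `Ř = -id`.
-/

open scoped TensorProduct Classical

theorem LinearMap.apply_apply_eq_of_apply_eq_sum_erase {R M ι : Type*} [Ring R]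
    [AddCommGroup M] [Module R M] [DecidableEq ι] (f : M →ₗ[R] M) {A : Finset ι} (x : ι → M)
    (hA : (A.card : R) = 2) (hf : ∀ a ∈ A, f (x a) = ∑ b ∈ A.erase a, x b) {a : ι}
    (ha : a ∈ A) : f (f (x a)) = x a := by
  have hf' : ∀ b ∈ A, f (x b) = (∑ c ∈ A, x c) - x b := fun b hb => by
    rw [hf b hb, Finset.sum_erase_eq_sub hb]
  have hcard : ((A.card - 1 : ℕ) : R) = 1 := by
    rw [Nat.cast_sub (Finset.card_pos.2 ⟨a, ha⟩), hA]
    norm_num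
  calc f (f (x a)) = ∑ b ∈ A.erase a, ((∑ c ∈ A, x c) - x b) := by
        rw [hf a ha, map_sum]
        exact Finset.sum_congr rfl fun b hb => hf' b (Finset.mem_of_mem_erase hb)
    _ = x a := by
        rw [Finset.sum_sub_distrib, Finset.sum_const, Finset.card_erase_of_mem ha,
          ← Nat.cast_smul_eq_nsmul R, hcard, one_smul, Finset.sum_erase_eq_sub ha, sub_sub_cancel]

section TrianglePresentation

variable {P L : Type*} [Fintype P] [Membership P L] {σ : P ≃ L} {T : Set (P × P × P)}

noncomputable def tripleFiber (T : Set (P × P × P)) (s : P) : Finset (P × P) :=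
  Finset.univ.filter fun zw => (zw.1, zw.2, s) ∈ T

@[simp]
theorem mem_tripleFiber {s : P} {zw : P × P} : zw ∈ tripleFiber T s ↔ (zw.1, zw.2, s) ∈ T := by
  simp [tripleFiber]

theorem filter_exists_mem_eq_erase_tripleFiber [DecidableEq P]
    (hiii : ∀ u v w₁ w₂, (u, v, w₁) ∈ T → (u, v, w₂) ∈ T → w₁ = w₂) {a b s : P}
    (hab : (a, b, s) ∈ T) :
    Finset.univ.filter (fun zw : P × P =>
        zw ≠ (a, b) ∧ ∃ s', (a, b, s') ∈ T ∧ (zw.1, zw.2, s') ∈ T) =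
      (tripleFiber T s).erase (a, b) := by
  ext zw
  simp only [Finset.mem_filter, Finset.mem_univ, true_and, Finset.mem_erase, mem_tripleFiber]
  refine and_congr_right fun _ => ⟨?_, fun hzw => ⟨s, hab, hzw⟩⟩
  rintro ⟨s', hs', hzw⟩
  rwa [hiii a b s s' hab hs']

theorem card_tripleFiber (hi : ∀ u v : P, (∃ w, (u, v, w) ∈ T) ↔ v ∈ σ u)
    (hii : ∀ u v w, (u, v, w) ∈ T → (v, w, u) ∈ T)
    (hiv : ∀ u₁ u₂ v w, (u₁, v, w) ∈ T → (u₂, v, w) ∈ T → u₁ = u₂) (s : P) :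
    (tripleFiber T s).card = Configuration.lineCount L s := by
  have hbij : (tripleFiber T s).card = (Finset.univ.filter fun w : P => s ∈ σ w).card := by
    refine Finset.card_bij (fun zw _ => zw.2) ?_ ?_ ?_
    · intro zw hzw
      simpa using (hi zw.2 s).1 ⟨_, hii _ _ _ (mem_tripleFiber.1 hzw)⟩
    · intro a ha b hb hab
      exact Prod.ext (hiv a.1 b.1 a.2 s (mem_tripleFiber.1 ha) (hab ▸ mem_tripleFiber.1 hb)) hab
    · intro w hw
      obtain ⟨z, hz⟩ := (hi w s).2 (by simpa using hw)
      exact ⟨(z, w), mem_tripleFiber.2 (hii _ _ _ (hii _ _ _ hz)), rfl⟩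
  rw [hbij, ← Fintype.card_subtype, ← Nat.card_eq_fintype_card]
  exact Nat.card_congr (σ.subtypeEquiv fun _ => Iff.rfl)

end TrianglePresentation

theorem stmt_12_general (P L : Type*) [Fintype P] [Fintype L] [DecidableEq P] [Membership P L]
    [Configuration.ProjectivePlane P L] (q : ℕ)
    (hq : Configuration.ProjectivePlane.order P L = q)
    (σ : P ≃ L) (T : Set (P × P × P))
    (hi : ∀ u v : P, (∃ w, (u, v, w) ∈ T) ↔ v ∈ σ u)
    (hii : ∀ u v w, (u, v, w) ∈ T → (v, w, u) ∈ T)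
    (hiii : ∀ u v w₁ w₂, (u, v, w₁) ∈ T → (u, v, w₂) ∈ T → w₁ = w₂)
    (hiv : ∀ u₁ u₂ v w, (u₁, v, w) ∈ T → (u₂, v, w) ∈ T → u₁ = u₂)
    (𝕜 : Type*) [Field 𝕜] (p : ℕ) [CharP 𝕜 p] (hqp : q ≡ 1 [MOD p])
    (Rc : (P → 𝕜) ⊗[𝕜] (P → 𝕜) →ₗ[𝕜] (P → 𝕜) ⊗[𝕜] (P → 𝕜))
    (hRc₁ : ∀ u v : P, v ∈ σ u →
      Rc (Pi.single u (1 : 𝕜) ⊗ₜ[𝕜] Pi.single v (1 : 𝕜)) =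
        ∑ zw : P × P,
          if zw ≠ (u, v) ∧ ∃ s, (u, v, s) ∈ T ∧ (zw.1, zw.2, s) ∈ T then
            Pi.single zw.1 (1 : 𝕜) ⊗ₜ[𝕜] Pi.single zw.2 (1 : 𝕜)
          else 0)
    (hRc₂ : ∀ u v : P, v ∉ σ u →
      Rc (Pi.single u (1 : 𝕜) ⊗ₜ[𝕜] Pi.single v (1 : 𝕜)) =
        -(Pi.single u (1 : 𝕜) ⊗ₜ[𝕜] Pi.single v (1 : 𝕜))) :
    Rc ∘ₗ Rc = LinearMap.id := by
  refine ((Pi.basisFun 𝕜 P).tensorProduct (Pi.basisFun 𝕜 P)).ext fun ⟨u, v⟩ => ?_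
  simp only [Module.Basis.tensorProduct_apply, Pi.basisFun_apply, LinearMap.comp_apply,
    LinearMap.id_apply]
  by_cases huv : v ∈ σ u
  · obtain ⟨s, hs⟩ := (hi u v).2 huv
    have hq1 : (q : 𝕜) = 1 := by simpa using (CharP.natCast_eq_natCast 𝕜 p).2 hqp
    have hcard : ((tripleFiber T s).card : 𝕜) = 2 := by
      rw [card_tripleFiber hi hii hiv, Configuration.ProjectivePlane.lineCount_eq, hq]
      push_cast [hq1]
      exact one_add_one_eq_two
    refine Rc.apply_apply_eq_of_apply_eq_sum_erase
      (fun zw : P × P => Pi.single zw.1 (1 : 𝕜) ⊗ₜ[𝕜] Pi.single zw.2 (1 : 𝕜)) hcard ?_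
      (mem_tripleFiber (zw := (u, v)) |>.2 hs)
    rintro ⟨a, b⟩ hab
    rw [hRc₁ a b ((hi a b).1 ⟨s, mem_tripleFiber.1 hab⟩), ← Finset.sum_filter,
      filter_exists_mem_eq_erase_tripleFiber hiii (mem_tripleFiber.1 hab)]
  · rw [hRc₂ u v huv, map_neg, hRc₂ u v huv, neg_neg]

theorem stmt_12 (P L : Type*) [Fintype P] [Fintype L] [DecidableEq P] [Membership P L]
    [Configuration.ProjectivePlane P L] (q : ℕ)
    (hq : Configuration.ProjectivePlane.order P L = q)
    (σ : P ≃ L) (T : Set (P × P × P))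
    (hi : ∀ u v : P, (∃ w, (u, v, w) ∈ T) ↔ v ∈ σ u)
    (hii : ∀ u v w, (u, v, w) ∈ T → (v, w, u) ∈ T)
    (hiii : ∀ u v w₁ w₂, (u, v, w₁) ∈ T → (u, v, w₂) ∈ T → w₁ = w₂)
    (hiv : ∀ u₁ u₂ v w, (u₁, v, w) ∈ T → (u₂, v, w) ∈ T → u₁ = u₂)
    (𝕜 : Type*) [Field 𝕜] (p : ℕ) (hp : p.Prime) [CharP 𝕜 p] (hqp : q ≡ 1 [MOD p])
    (Rc : (P → 𝕜) ⊗[𝕜] (P → 𝕜) →ₗ[𝕜] (P → 𝕜) ⊗[𝕜] (P → 𝕜))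
    (hRc₁ : ∀ u v : P, v ∈ σ u →
      Rc (Pi.single u (1 : 𝕜) ⊗ₜ[𝕜] Pi.single v (1 : 𝕜)) =
        ∑ zw : P × P,
          if zw ≠ (u, v) ∧ ∃ s, (u, v, s) ∈ T ∧ (zw.1, zw.2, s) ∈ T then
            Pi.single zw.1 (1 : 𝕜) ⊗ₜ[𝕜] Pi.single zw.2 (1 : 𝕜)
          else 0)
    (hRc₂ : ∀ u v : P, v ∉ σ u →
      Rc (Pi.single u (1 : 𝕜) ⊗ₜ[𝕜] Pi.single v (1 : 𝕜)) =
        -(Pi.single u (1 : 𝕜) ⊗ₜ[𝕜] Pi.single v (1 : 𝕜))) :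
    Rc ∘ₗ Rc = LinearMap.id :=
  stmt_12_general P L q hq σ T hi hii hiii hiv 𝕜 p hqp Rc hRc₁ hRc₂
end

section
/- Let T be a triangle presentation compatible with σ on an n-dimensional vector space V over a finite field F with q elements (n ≥ 3). Let a satisfy 1 < a < n − 1, let z, w ∈ Π_a with z ≠ w, let u, v ∈ Π₁, and suppose p′ ∈ Π_{a+1} satisfies (z, u, σ p′) ∈ T and (w, v, σ p′) ∈ T. Then p′ = z ⊔ w (the subspace generated by z and w) and finrank (z ⊓ w) = a − 1; in particular there is at most one such p′. -/
open Module

theorem stmt_16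
    (F : Type*) [Field F] [Fintype F] (V : Type*) [AddCommGroup V] [Module F V]
    [FiniteDimensional F V] (q n : ℕ) (hq : Fintype.card F = q)
    (hn : Module.finrank F V = n) (hn3 : 3 ≤ n)
    (σ : ProjGeom F V n → ProjGeom F V n)
    (hσ : ∀ x, σ (σ x) = x)
    (hσdim : ∀ x : ProjGeom F V n,
      Module.finrank F (σ x).val = n - Module.finrank F x.val)
    (T : Set (ProjGeom F V n × ProjGeom F V n × ProjGeom F V n))
    (h1 : ∀ u v : ProjGeom F V n, (∃ w, (u, v, w) ∈ T) ↔
      (σ u ≠ v ∧ ((σ u).val ≤ v.val ∨ v.val ≤ (σ u).val)))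
    (h2 : ∀ u v w, (u, v, w) ∈ T → (v, w, u) ∈ T)
    (h3 : ∀ u v w, (u, v, w) ∈ T →
      n ∣ Module.finrank F u.val + Module.finrank F v.val + Module.finrank F w.val)
    (h4 : ∀ u v w₁ w₂, (u, v, w₁) ∈ T → (u, v, w₂) ∈ T → w₁ = w₂)
    (h5 : ∀ u v w, (u, v, w) ∈ T → (σ w, σ v, σ u) ∈ T)
    (a : ℕ) (ha1 : 1 < a) (ha2 : a < n - 1)
    (z w : ProjGeom F V n) (hz : Module.finrank F z.val = a)
    (hw : Module.finrank F w.val = a) (hzw : z ≠ w)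
    (u v : ProjGeom F V n) (hu : Module.finrank F u.val = 1)
    (hv : Module.finrank F v.val = 1)
    (p' : ProjGeom F V n) (hp' : Module.finrank F p'.val = a + 1)
    (hzu : (z, u, σ p') ∈ T) (hwv : (w, v, σ p') ∈ T) :
    p'.val = z.val ⊔ w.val ∧
    Module.finrank F (z.val ⊓ w.val : Submodule F V) = a - 1 ∧
    (∀ p'' : ProjGeom F V n, Module.finrank F p''.val = a + 1 →
      (z, u, σ p'') ∈ T → (w, v, σ p'') ∈ T → p'' = p') := by
  -- key: if (x, e, σ p) ∈ T with finrank x = a, finrank p = a+1, then x ≤ p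
  have key : ∀ (p x e : ProjGeom F V n), Module.finrank F p.val = a + 1 →
      Module.finrank F x.val = a → (x, e, σ p) ∈ T → x.val ≤ p.val := by
    intro p x e hp hx hT
    have hT' : (σ p, x, e) ∈ T := h2 _ _ _ (h2 _ _ _ hT)
    have := (h1 (σ p) x).mp ⟨e, hT'⟩
    rw [hσ] at this
    rcases this.2 with h | h
    · exfalso
      have := Submodule.finrank_mono h
      omega
    · exact h
  have hzp : z.val ≤ p'.val := key p' z u hp' hz hzu
  have hwp : w.val ≤ p'.val := key p' w v hp' hw hwv
  have hsup : z.val ⊔ w.val ≤ p'.val := sup_le hzp hwp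
  have hne : z.val ⊔ w.val ≠ z.val := by
    intro h
    have : w.val ≤ z.val := le_trans le_sup_right (le_of_eq h)
    exact hzw (Subtype.ext (Submodule.eq_of_le_of_finrank_le this (by omega)).symm)
  have hlt : a < Module.finrank F (z.val ⊔ w.val : Submodule F V) := by
    rw [← hz]
    exact Submodule.finrank_lt_finrank_of_lt (lt_of_le_of_ne le_sup_left (Ne.symm hne))
  have hle : Module.finrank F (z.val ⊔ w.val : Submodule F V) ≤ a + 1 := by
    rw [← hp']; exact Submodule.finrank_mono hsup
  have hsupeq : Module.finrank F (z.val ⊔ w.val : Submodule F V) = a + 1 := by omega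
  have heq : z.val ⊔ w.val = p'.val :=
    Submodule.eq_of_le_of_finrank_le hsup (by omega)
  have hinf : Module.finrank F (z.val ⊓ w.val : Submodule F V) = a - 1 := by
    have := Submodule.finrank_sup_add_finrank_inf_eq z.val w.val
    rw [hsupeq, hz, hw] at this
    omega
  refine ⟨heq.symm, hinf, ?_⟩
  intro p'' hp'' hT1 hT2
  have heq'' : z.val ⊔ w.val = p''.val :=
    Submodule.eq_of_le_of_finrank_le
      (sup_le (key p'' z u hp'' hz hT1) (key p'' w v hp'' hw hT2)) (by omega)
  exact Subtype.ext (heq''.symm.trans heq)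
end

section
/- Let T be a triangle presentation compatible with σ on an n-dimensional vector space V over a finite field F with q elements (n ≥ 3). Let a satisfy 1 < a < n, let z, w ∈ Π_a with z ≠ w, and let u, v ∈ Π₁. If (p,q′,r,s) ∈ Π_{a−1} × Π₂ × Π₁ × Π₁ satisfies (z, σ r, σ p) ∈ T, (r, u, σ q′) ∈ T, (p, s, σ w) ∈ T and (s, v, σ q′) ∈ T, then p = z ⊓ w (so finrank (z ⊓ w) = a − 1), and moreover any two such quadruples (p,q′,r,s) coincide; in particular there is at most one such quadruple. -/
open Module

theorem stmt_17
    (F : Type*) [Field F] [Fintype F] (V : Type*) [AddCommGroup V] [Module F V]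
    [FiniteDimensional F V] (q n : ℕ) (hq : Fintype.card F = q)
    (hn : Module.finrank F V = n) (hn3 : 3 ≤ n)
    (σ : ProjGeom F V n → ProjGeom F V n)
    (hσ : ∀ x, σ (σ x) = x)
    (hσdim : ∀ x : ProjGeom F V n,
      Module.finrank F (σ x).val = n - Module.finrank F x.val)
    (T : Set (ProjGeom F V n × ProjGeom F V n × ProjGeom F V n))
    (h1 : ∀ u v : ProjGeom F V n, (∃ w, (u, v, w) ∈ T) ↔
      (σ u ≠ v ∧ ((σ u).val ≤ v.val ∨ v.val ≤ (σ u).val)))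
    (h2 : ∀ u v w, (u, v, w) ∈ T → (v, w, u) ∈ T)
    (h3 : ∀ u v w, (u, v, w) ∈ T →
      n ∣ Module.finrank F u.val + Module.finrank F v.val + Module.finrank F w.val)
    (h4 : ∀ u v w₁ w₂, (u, v, w₁) ∈ T → (u, v, w₂) ∈ T → w₁ = w₂)
    (h5 : ∀ u v w, (u, v, w) ∈ T → (σ w, σ v, σ u) ∈ T)
    (a : ℕ) (ha1 : 1 < a) (ha2 : a < n)
    (z w : ProjGeom F V n) (hz : Module.finrank F z.val = a)
    (hw : Module.finrank F w.val = a) (hzw : z ≠ w)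
    (u v : ProjGeom F V n) (hu : Module.finrank F u.val = 1)
    (hv : Module.finrank F v.val = 1)
    (p₀ q' r s : ProjGeom F V n)
    (hp₀ : Module.finrank F p₀.val = a - 1) (hq' : Module.finrank F q'.val = 2)
    (hr : Module.finrank F r.val = 1) (hs : Module.finrank F s.val = 1)
    (h₁ : (z, σ r, σ p₀) ∈ T) (h₂ : (r, u, σ q') ∈ T)
    (h₃ : (p₀, s, σ w) ∈ T) (h₄ : (s, v, σ q') ∈ T) :
    p₀.val = z.val ⊓ w.val ∧
    Module.finrank F (z.val ⊓ w.val : Submodule F V) = a - 1 ∧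
    (∀ p₂ q₂ r₂ s₂ : ProjGeom F V n,
      Module.finrank F p₂.val = a - 1 → Module.finrank F q₂.val = 2 →
      Module.finrank F r₂.val = 1 → Module.finrank F s₂.val = 1 →
      (z, σ r₂, σ p₂) ∈ T → (r₂, u, σ q₂) ∈ T →
      (p₂, s₂, σ w) ∈ T → (s₂, v, σ q₂) ∈ T →
      (p₂, q₂, r₂, s₂) = (p₀, q', r, s)) := by

  have σinj : ∀ x y : ProjGeom F V n, σ x = σ y → x = y := by
    intro x y h
    rw [← hσ x, h, hσ]
  -- key: any p with the two incidences equals z ⊓ w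
  have key : ∀ (p s' r' : ProjGeom F V n), Module.finrank F p.val = a - 1 →
      (z, σ r', σ p) ∈ T → (p, s', σ w) ∈ T → p.val = z.val ⊓ w.val := by
    intro p s' r' hp hT1 hT2
    have t2 : (σ p, z, σ r') ∈ T := h2 _ _ _ (h2 _ _ _ hT1)
    have hA := (h1 (σ p) z).mp ⟨_, t2⟩
    rw [hσ p] at hA
    have hpz : p.val ≤ z.val := by
      rcases hA.2 with h | h
      · exact h
      · exfalso
        have := Submodule.finrank_mono h
        rw [hz, hp] at this
        omega
    have t4 : (σ w, p, s') ∈ T := h2 _ _ _ (h2 _ _ _ hT2)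
    have hB := (h1 (σ w) p).mp ⟨_, t4⟩
    rw [hσ w] at hB
    have hpw : p.val ≤ w.val := by
      rcases hB.2 with h | h
      · exfalso
        have := Submodule.finrank_mono h
        rw [hw, hp] at this
        omega
      · exact h
    have hinfz : Module.finrank F (z.val ⊓ w.val : Submodule F V) ≤ a := by
      have := Submodule.finrank_mono (inf_le_left : z.val ⊓ w.val ≤ z.val)
      rwa [hz] at this
    have hle : Module.finrank F (z.val ⊓ w.val : Submodule F V) ≤ a - 1 := by
      by_contra hcon
      have heq : Module.finrank F (z.val ⊓ w.val : Submodule F V) = a := by omega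
      have e1 : z.val ⊓ w.val = z.val :=
        Submodule.eq_of_le_of_finrank_le inf_le_left (by rw [hz, heq])
      have e2 : z.val ⊓ w.val = w.val :=
        Submodule.eq_of_le_of_finrank_le inf_le_right (by rw [hw, heq])
      exact hzw (Subtype.ext (e1 ▸ e2))
    exact Submodule.eq_of_le_of_finrank_le (le_inf hpz hpw) (by rw [hp]; exact hle)
  have keyp := key p₀ s r hp₀ h₁ h₃
  refine ⟨keyp, by rw [← keyp]; exact hp₀, ?_⟩
  intro p₂ q₂ r₂ s₂ hdp hdq hdr hds H1 H2 H3 H4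
  have hp2 : p₂ = p₀ := Subtype.ext (by rw [key p₂ s₂ r₂ hdp H1 H3, ← keyp])
  rw [hp2] at H1 H3
  have hr2 : r₂ = r := by
    have A : (σ p₀, z, σ r₂) ∈ T := h2 _ _ _ (h2 _ _ _ H1)
    have B : (σ p₀, z, σ r) ∈ T := h2 _ _ _ (h2 _ _ _ h₁)
    exact σinj _ _ (h4 _ _ _ _ A B)
  rw [hr2] at H2
  have hq2 : q₂ = q' := σinj _ _ (h4 _ _ _ _ H2 h₂)
  have hs2 : s₂ = s := by
    have A : (σ w, p₀, s₂) ∈ T := h2 _ _ _ (h2 _ _ _ H3)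
    have B : (σ w, p₀, s) ∈ T := h2 _ _ _ (h2 _ _ _ h₃)
    exact h4 _ _ _ _ A B
  rw [hp2, hq2, hr2, hs2]
end

section
/- Let T be a triangle presentation compatible with σ on an n-dimensional vector space V over a finite field F with q elements (n ≥ 3). Let z, w ∈ Π_{n−1} with z ≠ w and u, v ∈ Π₁, and set A := {(p,q′,r,s) ∈ Π_{n−2} × Π₂ × Π₁ × Π₁ : (z, σ r, σ p) ∈ T ∧ (r, u, σ q′) ∈ T ∧ (p, s, σ w) ∈ T ∧ (s, v, σ q′) ∈ T}. Then A has at most one element, and A is nonempty if and only if u = σ z and v = σ w. -/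
open Module

/-- Auxiliary arithmetic lemma: a positive multiple of `n` below `3n` is `n` or `2n`. -/
lemma sum_dvd_cases {n s : ℕ} (hn : 0 < n) (h : n ∣ s) (h1 : 0 < s) (h2 : s < 3 * n) :
    s = n ∨ s = 2 * n := by
  obtain ⟨k, rfl⟩ := h
  have hk0 : 0 < k := by
    rcases Nat.eq_zero_or_pos k with h' | h'
    · subst h'; simp at h1
    · exact h'
  have hk3 : k < 3 := by
    by_contra h'
    push_neg at h'
    have : 3 * n ≤ n * k := by
      calc 3 * n = n * 3 := by ring
        _ ≤ n * k := Nat.mul_le_mul_left n h'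
    omega
  interval_cases k <;> omega

theorem stmt_18
    (F : Type*) [Field F] [Fintype F] (V : Type*) [AddCommGroup V] [Module F V]
    [FiniteDimensional F V] (q n : ℕ) (hq : Fintype.card F = q)
    (hn : Module.finrank F V = n) (hn3 : 3 ≤ n)
    (σ : ProjGeom F V n → ProjGeom F V n)
    (hσ : ∀ x, σ (σ x) = x)
    (hσdim : ∀ x : ProjGeom F V n,
      Module.finrank F (σ x).val = n - Module.finrank F x.val)
    (T : Set (ProjGeom F V n × ProjGeom F V n × ProjGeom F V n))
    (h1 : ∀ u v : ProjGeom F V n, (∃ w, (u, v, w) ∈ T) ↔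
      (σ u ≠ v ∧ ((σ u).val ≤ v.val ∨ v.val ≤ (σ u).val)))
    (h2 : ∀ u v w, (u, v, w) ∈ T → (v, w, u) ∈ T)
    (h3 : ∀ u v w, (u, v, w) ∈ T →
      n ∣ Module.finrank F u.val + Module.finrank F v.val + Module.finrank F w.val)
    (h4 : ∀ u v w₁ w₂, (u, v, w₁) ∈ T → (u, v, w₂) ∈ T → w₁ = w₂)
    (h5 : ∀ u v w, (u, v, w) ∈ T → (σ w, σ v, σ u) ∈ T)
    (z w : ProjGeom F V n) (hz : Module.finrank F z.val = n - 1)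
    (hw : Module.finrank F w.val = n - 1) (hzw : z ≠ w)
    (u v : ProjGeom F V n) (hu : Module.finrank F u.val = 1)
    (hv : Module.finrank F v.val = 1) :
    Nat.card {x : ProjGeom F V n × ProjGeom F V n × ProjGeom F V n × ProjGeom F V n //
        Module.finrank F x.1.val = n - 2 ∧ Module.finrank F x.2.1.val = 2 ∧
        Module.finrank F x.2.2.1.val = 1 ∧ Module.finrank F x.2.2.2.val = 1 ∧
        (z, σ x.2.2.1, σ x.1) ∈ T ∧ (x.2.2.1, u, σ x.2.1) ∈ T ∧
        (x.1, x.2.2.2, σ w) ∈ T ∧ (x.2.2.2, v, σ x.2.1) ∈ T} ≤ 1 ∧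
    (Set.Nonempty {x : ProjGeom F V n × ProjGeom F V n × ProjGeom F V n × ProjGeom F V n |
        Module.finrank F x.1.val = n - 2 ∧ Module.finrank F x.2.1.val = 2 ∧
        Module.finrank F x.2.2.1.val = 1 ∧ Module.finrank F x.2.2.2.val = 1 ∧
        (z, σ x.2.2.1, σ x.1) ∈ T ∧ (x.2.2.1, u, σ x.2.1) ∈ T ∧
        (x.1, x.2.2.2, σ w) ∈ T ∧ (x.2.2.2, v, σ x.2.1) ∈ T} ↔
      (u = σ z ∧ v = σ w)) := by
  have hσinj : Function.Injective σ := Function.LeftInverse.injective hσ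
  have hext : ∀ a b : ProjGeom F V n, a.val = b.val → a = b := fun a b h => Subtype.ext h
  -- the key analysis of an arbitrary element of the set
  have key : ∀ P Q R S : ProjGeom F V n,
      Module.finrank F P.val = n - 2 → Module.finrank F Q.val = 2 →
      Module.finrank F R.val = 1 → Module.finrank F S.val = 1 →
      (z, σ R, σ P) ∈ T → (R, u, σ Q) ∈ T → (P, S, σ w) ∈ T → (S, v, σ Q) ∈ T →
      u = σ z ∧ v = σ w ∧ σ Q = P ∧ P.val ≤ z.val ⊓ w.val := by
    intro P Q R S hdP hdQ hdR hdS hT1 hT2 hT3 hT4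
    have hdσP : Module.finrank F (σ P).val = 2 := by rw [hσdim P, hdP]; omega
    -- derived triangle (R, σ z, P) ∈ T
    have hRz : (R, σ z, P) ∈ T := by
      have h' := h5 _ _ _ hT1
      rw [hσ P, hσ R] at h'
      exact h2 _ _ _ h'
    -- P ≤ z
    have hPz : P.val ≤ z.val := by
      have t1a : (σ P, z, σ R) ∈ T := h2 _ _ _ (h2 _ _ _ hT1)
      obtain ⟨hne, hcmp⟩ := (h1 (σ P) z).mp ⟨σ R, t1a⟩
      rw [hσ P] at hcmp
      rcases hcmp with h' | h'
      · exact h'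
      · have := Submodule.finrank_mono h'
        rw [hz, hdP] at this; omega
    -- P ≤ w
    have hPw : P.val ≤ w.val := by
      have t3a : (σ w, P, S) ∈ T := h2 _ _ _ (h2 _ _ _ hT3)
      obtain ⟨hne, hcmp⟩ := (h1 (σ w) P).mp ⟨S, t3a⟩
      rw [hσ w] at hcmp
      rcases hcmp with h' | h'
      · have := Submodule.finrank_mono h'
        rw [hw, hdP] at this; omega
      · exact h'
    -- R ≠ S
    have hRS : R ≠ S := by
      intro h
      have t3b : (S, σ w, P) ∈ T := h2 _ _ _ hT3
      rw [← h] at t3b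
      have e1 : (P, R, σ w) ∈ T := h2 _ _ _ (h2 _ _ _ t3b)
      have e2 : (P, R, σ z) ∈ T := h2 _ _ _ (h2 _ _ _ hRz)
      have := h4 _ _ _ _ e1 e2
      exact hzw ((hσinj this).symm)
    -- R ≤ Q
    have hRQ : R.val ≤ Q.val := by
      have t2a : (σ Q, R, u) ∈ T := h2 _ _ _ (h2 _ _ _ hT2)
      obtain ⟨hne, hcmp⟩ := (h1 (σ Q) R).mp ⟨u, t2a⟩
      rw [hσ Q] at hcmp
      rcases hcmp with h' | h'
      · have := Submodule.finrank_mono h'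
        rw [hdQ, hdR] at this; omega
      · exact h'
    -- S ≤ Q
    have hSQ : S.val ≤ Q.val := by
      have t4a : (σ Q, S, v) ∈ T := h2 _ _ _ (h2 _ _ _ hT4)
      obtain ⟨hne, hcmp⟩ := (h1 (σ Q) S).mp ⟨v, t4a⟩
      rw [hσ Q] at hcmp
      rcases hcmp with h' | h'
      · have := Submodule.finrank_mono h'
        rw [hdQ, hdS] at this; omega
      · exact h'
    -- R ≤ σ P
    have hRp : R.val ≤ (σ P).val := by
      have t1b : (σ R, σ P, z) ∈ T := h2 _ _ _ hT1
      obtain ⟨hne, hcmp⟩ := (h1 (σ R) (σ P)).mp ⟨z, t1b⟩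
      rw [hσ R] at hcmp
      rcases hcmp with h' | h'
      · exact h'
      · have := Submodule.finrank_mono h'
        rw [hdσP, hdR] at this; omega
    -- S ≤ σ P
    have hSp : S.val ≤ (σ P).val := by
      obtain ⟨hne, hcmp⟩ := (h1 P S).mp ⟨σ w, hT3⟩
      rcases hcmp with h' | h'
      · have := Submodule.finrank_mono h'
        rw [hdσP, hdS] at this; omega
      · exact h'
    -- dim (R ⊔ S) = 2
    have hRSval : R.val ≠ S.val := fun h => hRS (hext _ _ h)
    have hinfRS : Module.finrank F (R.val ⊓ S.val : Submodule F V) = 0 := by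
      have hlt : R.val ⊓ S.val < R.val := by
        rcases lt_or_eq_of_le (inf_le_left : R.val ⊓ S.val ≤ R.val) with h' | h'
        · exact h'
        · exfalso
          have hle : R.val ≤ S.val := by rw [← h']; exact inf_le_right
          exact hRSval (Submodule.eq_of_le_of_finrank_le hle (by rw [hdR, hdS]))
      have := Submodule.finrank_lt_finrank_of_lt hlt
      rw [hdR] at this; omega
    have hsupRS : Module.finrank F (R.val ⊔ S.val : Submodule F V) = 2 := by
      have := Submodule.finrank_sup_add_finrank_inf_eq R.val S.val
      rw [hdR, hdS, hinfRS] at this; omega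
    -- Q = σ P
    have hQval : Q.val = (σ P).val := by
      have e1 : R.val ⊔ S.val = Q.val :=
        Submodule.eq_of_le_of_finrank_le (sup_le hRQ hSQ) (by rw [hdQ, hsupRS])
      have e2 : R.val ⊔ S.val = (σ P).val :=
        Submodule.eq_of_le_of_finrank_le (sup_le hRp hSp) (by rw [hdσP, hsupRS])
      rw [← e1, e2]
    have hσQ : σ Q = P := by
      have : Q = σ P := hext _ _ hQval
      rw [this, hσ]
    -- u = σ z
    have huz : u = σ z := by
      have hT2' : (R, u, P) ∈ T := by rw [← hσQ]; exact hT2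
      have e3 : (P, R, u) ∈ T := h2 _ _ _ (h2 _ _ _ hT2')
      have e2 : (P, R, σ z) ∈ T := h2 _ _ _ (h2 _ _ _ hRz)
      exact h4 _ _ _ _ e3 e2
    -- v = σ w
    have hvw : v = σ w := by
      have hT4' : (S, v, P) ∈ T := by rw [← hσQ]; exact hT4
      have e4 : (P, S, v) ∈ T := h2 _ _ _ (h2 _ _ _ hT4')
      have e5 : (P, S, σ w) ∈ T := hT3
      exact h4 _ _ _ _ e4 e5
    exact ⟨huz, hvw, hσQ, le_inf hPz hPw⟩
  -- dim (z ⊓ w) facts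
  have hwz : ¬(w.val ≤ z.val) := by
    intro h
    exact hzw (hext z w (Submodule.eq_of_le_of_finrank_le h (by rw [hz, hw])).symm)
  have hzwlt : z.val ⊓ w.val < z.val := by
    rcases lt_or_eq_of_le (inf_le_left : z.val ⊓ w.val ≤ z.val) with h' | h'
    · exact h'
    · exfalso
      have : z.val ≤ w.val := by rw [← h']; exact inf_le_right
      exact hzw (hext z w (Submodule.eq_of_le_of_finrank_le this (by rw [hz, hw])))
  have hdzwlt : Module.finrank F (z.val ⊓ w.val : Submodule F V) < n - 1 := by
    have := Submodule.finrank_lt_finrank_of_lt hzwlt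
    rw [hz] at this; exact this
  constructor
  · -- at most one element
    have hss : ∀ a b : {x : ProjGeom F V n × ProjGeom F V n × ProjGeom F V n × ProjGeom F V n //
        Module.finrank F x.1.val = n - 2 ∧ Module.finrank F x.2.1.val = 2 ∧
        Module.finrank F x.2.2.1.val = 1 ∧ Module.finrank F x.2.2.2.val = 1 ∧
        (z, σ x.2.2.1, σ x.1) ∈ T ∧ (x.2.2.1, u, σ x.2.1) ∈ T ∧
        (x.1, x.2.2.2, σ w) ∈ T ∧ (x.2.2.2, v, σ x.2.1) ∈ T}, a = b := by
      rintro ⟨⟨P₁, Q₁, R₁, S₁⟩, hd11, hd12, hd13, hd14, hA1, hB1, hC1, hD1⟩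
        ⟨⟨P₂, Q₂, R₂, S₂⟩, hd21, hd22, hd23, hd24, hA2, hB2, hC2, hD2⟩
      dsimp only at hd11 hd12 hd13 hd14 hA1 hB1 hC1 hD1 hd21 hd22 hd23 hd24 hA2 hB2 hC2 hD2
      obtain ⟨_, _, hq1, hp1⟩ := key P₁ Q₁ R₁ S₁ hd11 hd12 hd13 hd14 hA1 hB1 hC1 hD1
      obtain ⟨_, _, hq2, hp2⟩ := key P₂ Q₂ R₂ S₂ hd21 hd22 hd23 hd24 hA2 hB2 hC2 hD2
      have hP1 : P₁.val = z.val ⊓ w.val :=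
        Submodule.eq_of_le_of_finrank_le hp1 (by rw [hd11]; omega)
      have hP2 : P₂.val = z.val ⊓ w.val :=
        Submodule.eq_of_le_of_finrank_le hp2 (by rw [hd21]; omega)
      have eqP : P₁ = P₂ := hext _ _ (hP1.trans hP2.symm)
      have eqQ : Q₁ = Q₂ := by
        have e1 : Q₁ = σ P₁ := by rw [← hq1, hσ]
        have e2 : Q₂ = σ P₂ := by rw [← hq2, hσ]
        rw [e1, e2, eqP]
      have eqR : R₁ = R₂ := by
        rw [← eqP] at hA2
        have e1 : (σ P₁, z, σ R₁) ∈ T := h2 _ _ _ (h2 _ _ _ hA1)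
        have e2 : (σ P₁, z, σ R₂) ∈ T := h2 _ _ _ (h2 _ _ _ hA2)
        exact hσinj (h4 _ _ _ _ e1 e2)
      have eqS : S₁ = S₂ := by
        rw [← eqP] at hC2
        have e1 : (σ w, P₁, S₁) ∈ T := h2 _ _ _ (h2 _ _ _ hC1)
        have e2 : (σ w, P₁, S₂) ∈ T := h2 _ _ _ (h2 _ _ _ hC2)
        exact h4 _ _ _ _ e1 e2
      subst eqP; subst eqQ; subst eqR; subst eqS; rfl
    have : Subsingleton {x : ProjGeom F V n × ProjGeom F V n × ProjGeom F V n × ProjGeom F V n //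
        Module.finrank F x.1.val = n - 2 ∧ Module.finrank F x.2.1.val = 2 ∧
        Module.finrank F x.2.2.1.val = 1 ∧ Module.finrank F x.2.2.2.val = 1 ∧
        (z, σ x.2.2.1, σ x.1) ∈ T ∧ (x.2.2.1, u, σ x.2.1) ∈ T ∧
        (x.1, x.2.2.2, σ w) ∈ T ∧ (x.2.2.2, v, σ x.2.1) ∈ T} := ⟨hss⟩
    exact Finite.card_le_one_iff_subsingleton.mpr this
  · constructor
    · rintro ⟨⟨P, Q, R, S⟩, hd1, hd2, hd3, hd4, hA, hB, hC, hD⟩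
      obtain ⟨huz, hvw, _, _⟩ := key P Q R S hd1 hd2 hd3 hd4 hA hB hC hD
      exact ⟨huz, hvw⟩
    · rintro ⟨hu', hv'⟩
      -- z ⊔ w = ⊤
      have hsup_top : z.val ⊔ w.val = ⊤ := by
        apply Submodule.eq_top_of_finrank_eq
        have hlt : z.val < z.val ⊔ w.val :=
          lt_of_le_of_ne le_sup_left (fun h => hwz (by rw [h]; exact le_sup_right))
        have h1' := Submodule.finrank_lt_finrank_of_lt hlt
        have h2' : Module.finrank F (z.val ⊔ w.val : Submodule F V) ≤ n := by
          exact le_trans (Submodule.finrank_le _) (le_of_eq hn)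
        rw [hz] at h1'
        rw [hn]; omega
      have hdinf : Module.finrank F (z.val ⊓ w.val : Submodule F V) = n - 2 := by
        have h' := Submodule.finrank_sup_add_finrank_inf_eq z.val w.val
        rw [hsup_top, hz, hw, finrank_top, hn] at h'
        omega
      set P : ProjGeom F V n := ⟨z.val ⊓ w.val, by rw [hdinf]; omega⟩ with hPdef
      have hdP : Module.finrank F P.val = n - 2 := hdinf
      have hdσP : Module.finrank F (σ P).val = 2 := by rw [hσdim P, hdP]; omega
      have hPz : P.val ≤ z.val := inf_le_left
      have hPw : P.val ≤ w.val := inf_le_right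
      -- triangle (σ P, z, t)
      have hPnez : P ≠ z := by
        intro h
        rw [h, hz] at hdP; omega
      obtain ⟨t, ht⟩ := (h1 (σ P) z).mpr
        ⟨by rw [hσ]; exact hPnez, by rw [hσ]; exact Or.inl hPz⟩
      have hdt : Module.finrank F t.val = n - 1 := by
        have hd := h3 _ _ _ ht
        rw [hdσP, hz] at hd
        have hb := t.2
        rcases sum_dvd_cases (by omega) hd (by omega) (by omega) with h' | h' <;> omega
      set R : ProjGeom F V n := σ t with hRdef
      have hσR : σ R = t := hσ t
      have hdR : Module.finrank F R.val = 1 := by rw [hRdef, hσdim t, hdt]; omega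
      set Q : ProjGeom F V n := σ P with hQdef
      have hσQ : σ Q = P := hσ P
      have hdQ : Module.finrank F Q.val = 2 := hdσP
      -- T1
      have hT1 : (z, σ R, σ P) ∈ T := by rw [hσR]; exact h2 _ _ _ ht
      -- T2
      have hT2 : (R, u, σ Q) ∈ T := by
        rw [hu', hσQ]
        have h' := h5 _ _ _ hT1
        rw [hσ P, hσ R] at h'
        exact h2 _ _ _ h'
      -- triangle (σ w, P, S)
      have hPnew : σ (σ w) ≠ P := by
        rw [hσ]
        intro h
        rw [← h, hw] at hdP; omega
      obtain ⟨S, hS⟩ := (h1 (σ w) P).mpr ⟨hPnew, by rw [hσ]; exact Or.inr hPw⟩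
      have hdσw : Module.finrank F (σ w).val = 1 := by rw [hσdim w, hw]; omega
      have hdS : Module.finrank F S.val = 1 := by
        have hd := h3 _ _ _ hS
        rw [hdσw, hdP] at hd
        have hb := S.2
        rcases sum_dvd_cases (by omega) hd (by omega) (by omega) with h' | h' <;> omega
      have hT3 : (P, S, σ w) ∈ T := h2 _ _ _ hS
      have hT4 : (S, v, σ Q) ∈ T := by
        rw [hv', hσQ]
        exact h2 _ _ _ hT3
      exact ⟨⟨P, Q, R, S⟩, hdP, hdQ, hdR, hdS, hT1, hT2, hT3, hT4⟩
end
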